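/- arXiv:2605.27214 — 10 statements merged into one kernel-verified Lean document; each statement's English description precedes it below -/
import Mathlib

section
/- Let σ be a permutation of Fin n and let A_σ be its permutation matrix over ℂ, with entries (A_σ)_{i,j} = 1 if σ i = j and 0 otherwise. Then the characteristic polynomial of A_σ equals (X − 1)^{n − (σ.cycleType).sum} * ∏_{ℓ ∈ σ.cycleType} (X^ℓ − 1). In particular, each cycle of length ℓ in the cycle decomposition of σ contributes exactly once to the multiplicity of each ℓ-th root of unity as an eigenvalue of A_σ. -/
open Polynomial

/-!
For a cycle `τ` with support of size `ℓ`, the only permutations whose Leibniz term in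
`det (X • 1 - P_τ)` has no zero factor are `1` and `τ⁻¹`; their terms are
`X ^ ℓ * (X - 1) ^ (n - ℓ)` and `-(X - 1) ^ (n - ℓ)`. For disjoint `g` and `h`, the support
of `g` is invariant under `g`, `h` and `g * h`, so all their permutation matrices are block
diagonal for it; comparing blocks gives `charpoly (g * h) * (X - 1) ^ n = charpoly g * charpoly h`,
and `(X - 1) ^ n` is monic, hence cancellable. Induction over the cycle decomposition finishes.
-/

open Finset

namespace Equiv.Perm

theorem IsCycle.eq_one_or_eq_inv_of_forall {α : Type*} [Finite α] {τ π : Perm α}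
    (hτ : τ.IsCycle) (h : ∀ x, π x = x ∨ π x = τ⁻¹ x) : π = 1 ∨ π = τ⁻¹ := by
  -- The fixed points of `π` are closed under `τ`, so they contain all of `τ.support` or none.
  have fixed_apply : ∀ x, π x = x → π (τ x) = τ x := fun x hx ↦ by
    rcases h (τ x) with h' | h'
    · exact h'
    · rw [inv_eq_iff_eq.2 rfl] at h'
      rw [π.injective (h'.trans hx.symm), hx]
  have fixed_pow_apply : ∀ x, π x = x → ∀ k : ℕ, π ((τ ^ k) x) = (τ ^ k) x := by
    intro x hx k
    induction k with
    | zero => exact hx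
    | succ k ih => rw [pow_succ', mul_apply, fixed_apply _ ih]
  by_cases hfix : ∃ x, τ x ≠ x ∧ π x = x
  · obtain ⟨x, hx, hπx⟩ := hfix
    left
    ext y
    by_cases hy : τ y = y
    · rcases h y with h' | h' <;> simp [h', inv_eq_iff_eq.2 hy.symm]
    · obtain ⟨k, rfl⟩ := hτ.exists_pow_eq hx hy
      simpa using fixed_pow_apply x hπx k
  · push Not at hfix
    right
    ext y
    rcases h y with h' | h'
    · by_cases hy : τ y = y
      · rw [h', inv_eq_iff_eq.2 hy.symm]
      · exact absurd h' (hfix y hy)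
    · exact h'

theorem prod_ite_apply_eq_self {α M : Type*} [Fintype α] [DecidableEq α] [CommMonoid M]
    (σ : Perm α) (a b : M) :
    ∏ x, (if σ x = x then a else b) = a ^ (Fintype.card α - #σ.support) * b ^ #σ.support := by
  rw [prod_ite, prod_const, prod_const, ← card_compl]
  congr 3
  ext x
  simp

end Equiv.Perm

namespace Matrix

open Equiv Equiv.Perm

variable {R α : Type*} [DecidableEq α]

theorem reindex_sumCompl_permutation [Zero R] [One R] (σ : Perm α) (p : α → Prop)
    [DecidablePred p] (h : ∀ x, p (σ x) ↔ p x) :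
    reindex (sumCompl p).symm (sumCompl p).symm (σ.permMatrix R) =
      fromBlocks ((σ.subtypePerm h).permMatrix R) 0 0
        ((σ.subtypePerm (p := fun x => ¬p x) fun x => (h x).not).permMatrix R) := by
  ext (i | i) (j | j)
  · simp [Subtype.ext_iff]
  · have : σ i ≠ j := fun hσ => j.2 (hσ ▸ (h i).2 i.2)
    simp [this]
  · have : σ i ≠ j := fun hσ => i.2 ((h i).1 (hσ ▸ j.2))
    simp [this]
  · simp [Subtype.ext_iff]

variable [CommRing R] [Fintype α]

theorem charpoly_permutation_of_isCycle {τ : Perm α} (hτ : τ.IsCycle) :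
    (τ.permMatrix R).charpoly =
      (X - 1) ^ (Fintype.card α - #τ.support) * (X ^ #τ.support - 1) := by
  have entry (i j : α) : charmatrix (τ.permMatrix R) i j =
      (if i = j then X else 0) - (if τ i = j then 1 else 0) := by
    simp [charmatrix_apply, diagonal_apply, apply_ite C]
  have vanish (π : Perm α) (hπ : π ≠ 1 ∧ π ≠ τ⁻¹) :
      sign π • ∏ i, charmatrix (τ.permMatrix R) (π i) i = 0 := by
    obtain ⟨i, hi1, hi2⟩ : ∃ i, π i ≠ i ∧ π i ≠ τ⁻¹ i := by
      by_contra! h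
      rcases hτ.eq_one_or_eq_inv_of_forall (fun i => or_iff_not_imp_left.2 (h i)) with h' | h'
      exacts [hπ.1 h', hπ.2 h']
    have entry_eq_zero : charmatrix (τ.permMatrix R) (π i) i = 0 := by
      rw [entry, if_neg hi1, if_neg fun h => hi2 (eq_inv_iff_eq.2 h), sub_zero]
    rw [prod_eq_zero (f := fun j => charmatrix (τ.permMatrix R) (π j) j) (mem_univ i)
      entry_eq_zero, smul_zero]
  have one_ne_inv : (1 : Perm α) ≠ τ⁻¹ := (inv_ne_one.2 hτ.ne_one).symm
  rw [charpoly, det_apply, Fintype.sum_eq_add _ _ one_ne_inv vanish]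
  have term_one : ∏ i, charmatrix (τ.permMatrix R) i i =
      (X - 1) ^ (Fintype.card α - #τ.support) * X ^ #τ.support := by
    rw [← prod_ite_apply_eq_self]
    refine prod_congr rfl fun i _ => ?_
    rw [entry, if_pos rfl]; split_ifs <;> simp
  have term_inv : ∏ i, charmatrix (τ.permMatrix R) (τ⁻¹ i) i =
      (X - 1) ^ (Fintype.card α - #τ.support) * (-1) ^ #τ.support := by
    rw [← prod_ite_apply_eq_self]
    refine prod_congr rfl fun i _ => ?_
    rw [entry, if_pos (eq_inv_iff_eq.1 rfl)]
    by_cases hi : τ i = i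
    · rw [if_pos (inv_eq_iff_eq.2 hi.symm), if_pos hi]
    · rw [if_neg fun h => hi (inv_eq_iff_eq.1 h).symm, if_neg hi, zero_sub]
  simp only [Perm.one_apply, Perm.sign_one, one_smul, term_one, sign_inv, hτ.sign, term_inv,
    Units.smul_def]
  push_cast
  have sq_neg_one_pow : ((-1 : R[X]) ^ #τ.support) ^ 2 = 1 := by
    rw [← pow_mul, pow_mul', neg_one_sq, one_pow]
  linear_combination (-(X - 1 : R[X]) ^ (Fintype.card α - #τ.support)) * sq_neg_one_pow

theorem charpoly_permutation_eq_mul (σ : Perm α) (p : α → Prop) [DecidablePred p]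
    (h : ∀ x, p (σ x) ↔ p x) :
    (σ.permMatrix R).charpoly = ((σ.subtypePerm h).permMatrix R).charpoly *
      ((σ.subtypePerm (p := fun x => ¬p x) fun x => (h x).not).permMatrix R).charpoly := by
  rw [← charpoly_reindex (sumCompl p).symm, reindex_sumCompl_permutation σ p h,
    charpoly_fromBlocks_zero₁₂]

theorem charpoly_permutation_mul_of_disjoint {g h : Perm α} (hgh : g.Disjoint h) :
    ((g * h).permMatrix R).charpoly * (X - 1) ^ Fintype.card α =
      (g.permMatrix R).charpoly * (h.permMatrix R).charpoly := by
  let p : α → Prop := (· ∈ g.support)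
  have hg (x : α) : p (g x) ↔ p x := apply_mem_support
  have hh (x : α) : p (h x) ↔ p x := mem_support_iff_of_commute hgh.commute.symm x
  have hgh' (x : α) : p ((g * h) x) ↔ p x := (hg _).trans (hh x)
  have h_on : h.subtypePerm hh = 1 := by
    ext ⟨x, hx⟩
    exact (hgh x).resolve_left (mem_support.1 hx)
  have g_off : g.subtypePerm (p := fun x => ¬p x) (fun x => (hg x).not) = 1 := by
    ext ⟨x, hx⟩
    exact notMem_support.1 hx
  have gh_on : (g * h).subtypePerm hgh' = g.subtypePerm hg := by
    rw [← subtypePerm_mul g h hg hh, h_on, mul_one]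
  have gh_off : (g * h).subtypePerm (p := fun x => ¬p x) (fun x => (hgh' x).not) =
      h.subtypePerm (p := fun x => ¬p x) (fun x => (hh x).not) := by
    rw [← subtypePerm_mul g h (fun x => (hg x).not) (fun x => (hh x).not), g_off, one_mul]
  have one_split := charpoly_permutation_eq_mul (R := R) 1 p (fun _ => Iff.rfl)
  rw [permMatrix_one, charpoly_one, subtypePerm_one, subtypePerm_one] at one_split
  rw [one_split, charpoly_permutation_eq_mul _ p hgh', charpoly_permutation_eq_mul g p hg,
    charpoly_permutation_eq_mul h p hh, gh_on, gh_off, g_off, h_on]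
  ring

theorem charpoly_permutation (σ : Perm α) :
    (σ.permMatrix R).charpoly = (X - 1) ^ (Fintype.card α - σ.cycleType.sum) *
      (σ.cycleType.map fun ℓ => (X : R[X]) ^ ℓ - 1).prod := by
  induction σ using cycle_induction_on with
  | base_one => simp [charpoly_one]
  | base_cycles τ hτ => simp [charpoly_permutation_of_isCycle hτ, hτ.cycleType]
  | induction_disjoint g h hgh _ ihg ihh =>
    have hle := sum_cycleType_le (g * h)
    rw [hgh.cycleType_mul, Multiset.sum_add] at hle
    have hX : IsRightRegular ((X - 1 : R[X]) ^ Fintype.card α) := by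
      simpa using ((monic_X_sub_C (1 : R)).pow (Fintype.card α)).isRegular.right
    apply hX
    beta_reduce
    rw [charpoly_permutation_mul_of_disjoint hgh, ihg, ihh, hgh.cycleType_mul, Multiset.sum_add,
      Multiset.map_add, Multiset.prod_add]
    have pow_exps : (X - 1 : R[X]) ^ (Fintype.card α - g.cycleType.sum) *
        (X - 1) ^ (Fintype.card α - h.cycleType.sum) =
        (X - 1) ^ (Fintype.card α - (g.cycleType.sum + h.cycleType.sum)) *
        (X - 1) ^ Fintype.card α := by
      rw [← pow_add, ← pow_add]
      congr 1
      omega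
    linear_combination (Multiset.map (fun ℓ => (X : R[X]) ^ ℓ - 1) g.cycleType).prod *
      (Multiset.map (fun ℓ => (X : R[X]) ^ ℓ - 1) h.cycleType).prod * pow_exps

end Matrix

/-- The characteristic polynomial of the permutation matrix of `σ` over `ℂ` is
`(X - 1) ^ (number of fixed points) * ∏ over cycle lengths ℓ of (X ^ ℓ - 1)`. -/
theorem charpoly_permMatrix (n : ℕ) (σ : Equiv.Perm (Fin n)) :
    (σ.toPEquiv.toMatrix : Matrix (Fin n) (Fin n) ℂ).charpoly =
      (X - 1) ^ (n - σ.cycleType.sum) *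
        (σ.cycleType.map (fun ℓ => (X : ℂ[X]) ^ ℓ - 1)).prod := by
  simpa using Matrix.charpoly_permutation (R := ℂ) σ
end

section
/- Let n be a positive integer, 1 ≤ r ≤ ⌊n/2⌋, and let σ be a permutation of Fin n which is an involution whose cycle decomposition consists of exactly r transpositions (i.e., σ * σ = 1 and σ.support.card = 2r). Then for every k : ℕ, the number of fixed points of σ^{⊙k} equals ∑_{ℓ=0}^{⌊k/2⌋} multichoose r ℓ * multichoose (n − 2r) (k − 2ℓ). -/
/-- The `k`-th symmetric tensor power of a permutation `σ` of `Fin n`: the permutation of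
`Sym (Fin n) k` sending a multiset `m` to `Sym.map σ m`. -/
def Equiv.Perm.symPow {n : ℕ} (σ : Equiv.Perm (Fin n)) (k : ℕ) :
    Equiv.Perm (Sym (Fin n) k) :=
  (Sym.equivCongr σ : Sym (Fin n) k ≃ Sym (Fin n) k)

/-- The number of fixed points of a permutation of a finite type. -/
def fixCount {α : Type*} [Fintype α] [DecidableEq α] (τ : Equiv.Perm α) : ℕ :=
  Fintype.card {x : α // τ x = x}

/-- `cycleCount τ s` is the number of cycles of length `s` in the cycle decomposition of `τ`;
for `s = 1` this is the number of fixed points. -/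
def cycleCount {α : Type*} [Fintype α] [DecidableEq α] (τ : Equiv.Perm α) (s : ℕ) : ℕ :=
  if s = 1 then fixCount τ
  else (τ.cycleFactorsFinset.filter (fun c => c.support.card = s)).card

/-! A multiset fixed by the involution `σ` splits uniquely as `a + σ a + b`, where `a` is supported
on the points `x < σ x` (one point of each of the `r` transpositions) and `b` on the `n - 2r` fixed
points. As `|a + σ a + b| = 2|a| + |b|`, sorting the fixed multisets of size `k` by `ℓ = |a|`
gives the formula. -/

open Finset

theorem Finset.card_sym {α : Type*} [DecidableEq α] (s : Finset α) (n : ℕ) :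
    #(s.sym n) = Nat.multichoose #s n := by
  conv_lhs => rw [← s.attach_map_val]
  rw [sym_map, card_map, ← univ_eq_attach, sym_univ, card_univ, Sym.card_sym_eq_multichoose,
    Fintype.card_coe]

namespace Equiv.Perm

theorem card_filter_apply_eq_self {α : Type*} [Fintype α] [DecidableEq α] (σ : Perm α) :
    #{x | σ x = x} = Fintype.card α - #σ.support := by
  have hfixed : ({x | σ x = x} : Finset α) = σ.supportᶜ := by
    ext x
    simp
  rw [hfixed, card_compl]

theorem map_add_map_add_eq_self {α : Type*} {σ : Perm α} (hσ : Function.Involutive σ)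
    {a b : Multiset α} (hb : ∀ x ∈ b, σ x = x) :
    (a + a.map σ + b).map σ = a + a.map σ + b := by
  rw [Multiset.map_add, Multiset.map_add, Multiset.map_map, hσ.comp_self, Multiset.map_id,
    add_comm (a.map σ), Multiset.map_congr rfl hb, Multiset.map_id']

section LinearOrder

variable {α : Type*} [LinearOrder α] {σ : Perm α}

theorem filter_lt_add_map_add_filter_fixed (hσ : Function.Involutive σ) {m : Multiset α}
    (hm : m.map σ = m) :
    m.filter (fun x => x < σ x) + (m.filter (fun x => x < σ x)).map σ
      + m.filter (fun x => σ x = x) = m := by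
  have hgt : (m.filter (fun x => x < σ x)).map σ = m.filter (fun x => σ x < x) := by
    conv_rhs => rw [← hm]
    rw [Multiset.filter_map]
    simp only [Function.comp_def, hσ _]
  rw [hgt]
  ext x
  simp only [Multiset.count_add, Multiset.count_filter]
  rcases lt_trichotomy x (σ x) with h | h | h
  · simp [h, h.ne', not_lt_of_gt h]
  · simp [← h]
  · simp [h, h.ne, not_lt_of_gt h]

theorem two_mul_card_filter_lt_add_card_filter_fixed (hσ : Function.Involutive σ)
    {m : Multiset α} (hm : m.map σ = m) :
    2 * Multiset.card (m.filter (fun x => x < σ x)) + Multiset.card (m.filter (fun x => σ x = x))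
      = Multiset.card m := by
  conv_rhs => rw [← filter_lt_add_map_add_filter_fixed hσ hm]
  rw [Multiset.card_add, Multiset.card_add, Multiset.card_map, two_mul]

theorem filter_lt_add_map_add (hσ : Function.Involutive σ) {a b : Multiset α}
    (ha : ∀ x ∈ a, x < σ x) (hb : ∀ x ∈ b, σ x = x) :
    (a + a.map σ + b).filter (fun x => x < σ x) = a := by
  rw [Multiset.filter_add, Multiset.filter_add, Multiset.filter_eq_self.2 ha, Multiset.filter_map,
    Multiset.filter_eq_nil.2, Multiset.filter_eq_nil.2, Multiset.map_zero, add_zero, add_zero]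
  · intro x hx
    simp [hb x hx]
  · intro x hx
    simpa [hσ x] using (ha x hx).le

theorem filter_fixed_add_map_add (hσ : Function.Involutive σ) {a b : Multiset α}
    (ha : ∀ x ∈ a, x < σ x) (hb : ∀ x ∈ b, σ x = x) :
    (a + a.map σ + b).filter (fun x => σ x = x) = b := by
  rw [Multiset.filter_add, Multiset.filter_add, Multiset.filter_eq_self.2 hb, Multiset.filter_map,
    Multiset.filter_eq_nil.2, Multiset.filter_eq_nil.2, Multiset.map_zero, zero_add, zero_add]
  · intro x hx
    simpa [hσ x] using (ha x hx).ne
  · intro x hx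
    exact (ha x hx).ne'

variable [Fintype α]

theorem two_mul_card_filter_lt (hσ : Function.Involutive σ) :
    2 * #{x | x < σ x} = #σ.support := by
  have hswap : #{x | σ x < x} = #{x | x < σ x} :=
    card_nbij' σ σ (fun x hx => by simpa [hσ x] using hx) (fun x hx => by simpa [hσ x] using hx)
      (fun x _ => hσ x) (fun x _ => hσ x)
  have hsupport : σ.support = ({x | x < σ x} : Finset α) ∪ ({x | σ x < x} : Finset α) := by
    ext x
    rw [mem_support, mem_union, mem_filter, mem_filter, ne_comm, ne_iff_lt_or_gt]
    simp
  rw [hsupport, card_union_of_disjoint (disjoint_filter.2 fun x _ h h' => lt_asymm h h'), hswap,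
    two_mul]

theorem card_filter_sym_map_eq_and_card_filter_lt (hσ : Function.Involutive σ) {k ℓ : ℕ}
    (hℓ : 2 * ℓ ≤ k) :
    #{m : Sym α k | (m : Multiset α).map σ = m ∧
        Multiset.card ((m : Multiset α).filter (fun x => x < σ x)) = ℓ}
      = #(({x | x < σ x} : Finset α).sym ℓ) * #(({x | σ x = x} : Finset α).sym (k - 2 * ℓ)) := by
  rw [← card_product]
  refine card_bij'
    (fun m hm => (Sym.mk ((m : Multiset α).filter (fun x => x < σ x)) (mem_filter.1 hm).2.2,
      Sym.mk ((m : Multiset α).filter (fun x => σ x = x)) (by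
        have := two_mul_card_filter_lt_add_card_filter_fixed hσ (mem_filter.1 hm).2.1
        rw [(mem_filter.1 hm).2.2, Sym.card_coe] at this
        omega)))
    (fun p _ => Sym.mk (p.1 + (p.1 : Multiset α).map σ + p.2) (by
      rw [Multiset.card_add, Multiset.card_add, Multiset.card_map, Sym.card_coe, Sym.card_coe]
      omega)) ?_ ?_ ?_ ?_
  · intro m _
    rw [mem_product, mem_sym_iff, mem_sym_iff]
    simp
  · intro p hp
    simp only [mem_product, mem_sym_iff, mem_filter, mem_univ, true_and] at hp
    refine mem_filter.2 ⟨mem_univ _, ?_⟩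
    rw [Sym.coe_mk, filter_lt_add_map_add (a := p.1) (b := p.2) hσ hp.1 hp.2, Sym.card_coe]
    exact ⟨map_add_map_add_eq_self hσ hp.2, rfl⟩
  · intro m hm
    exact Sym.coe_injective (filter_lt_add_map_add_filter_fixed hσ (mem_filter.1 hm).2.1)
  · intro p hp
    simp only [mem_product, mem_sym_iff, mem_filter, mem_univ, true_and] at hp
    ext : 1 <;> apply Sym.coe_injective
    · exact filter_lt_add_map_add (a := p.1) (b := p.2) hσ hp.1 hp.2
    · exact filter_fixed_add_map_add (a := p.1) (b := p.2) hσ hp.1 hp.2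

theorem card_filter_sym_map_eq (hσ : Function.Involutive σ) (k : ℕ) :
    #{m : Sym α k | (m : Multiset α).map σ = m} = ∑ ℓ ∈ range (k / 2 + 1),
      Nat.multichoose #{x | x < σ x} ℓ * Nat.multichoose #{x | σ x = x} (k - 2 * ℓ) := by
  have hfiber : ∀ m ∈ ({m : Sym α k | (m : Multiset α).map σ = m} : Finset _),
      Multiset.card ((m : Multiset α).filter (fun x => x < σ x)) ∈ range (k / 2 + 1) := by
    intro m hm
    have := two_mul_card_filter_lt_add_card_filter_fixed hσ (mem_filter.1 hm).2
    rw [Sym.card_coe] at this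
    rw [mem_range]
    omega
  rw [card_eq_sum_card_fiberwise hfiber]
  refine sum_congr rfl fun ℓ hℓ => ?_
  rw [filter_filter, card_filter_sym_map_eq_and_card_filter_lt hσ (by rw [mem_range] at hℓ; omega),
    card_sym, card_sym]

end LinearOrder

end Equiv.Perm

theorem fixCount_symPow {n : ℕ} (σ : Equiv.Perm (Fin n)) (k : ℕ) :
    fixCount (σ.symPow k) = #{m : Sym (Fin n) k | (m : Multiset (Fin n)).map σ = m} := by
  rw [fixCount, Fintype.card_subtype]
  congr 1
  ext m
  simp only [mem_filter, mem_univ, true_and, Sym.ext_iff]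
  rfl

theorem fixCount_symPow_involution_general (n r : ℕ)
    (σ : Equiv.Perm (Fin n)) (hinv : σ * σ = 1) (hsupp : σ.support.card = 2 * r) (k : ℕ) :
    fixCount (σ.symPow k) =
      ∑ ℓ ∈ Finset.range (k / 2 + 1),
        Nat.multichoose r ℓ * Nat.multichoose (n - 2 * r) (k - 2 * ℓ) := by
  have hσ : Function.Involutive σ := fun x => by
    rw [← Equiv.Perm.mul_apply, hinv, Equiv.Perm.one_apply]
  have hpairs : #{x | x < σ x} = r := by
    have := Equiv.Perm.two_mul_card_filter_lt hσ
    omega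
  have hfixed : #{x | σ x = x} = n - 2 * r := by
    rw [Equiv.Perm.card_filter_apply_eq_self, hsupp, Fintype.card_fin]
  rw [fixCount_symPow, Equiv.Perm.card_filter_sym_map_eq hσ, hpairs, hfixed]

/-- The number of fixed points of the symmetric tensor power of an involution consisting of
exactly r transpositions. -/
theorem fixCount_symPow_involution (n r : ℕ) (hn : 0 < n) (hr : 1 ≤ r) (hrn : r ≤ n / 2)
    (σ : Equiv.Perm (Fin n)) (hinv : σ * σ = 1) (hsupp : σ.support.card = 2 * r) (k : ℕ) :
    fixCount (σ.symPow k) =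
      ∑ ℓ ∈ Finset.range (k / 2 + 1),
        Nat.multichoose r ℓ * Nat.multichoose (n - 2 * r) (k - 2 * ℓ) :=
  fixCount_symPow_involution_general n r σ hinv hsupp k
end

section
/- Let n ≥ 2 and let σ = Equiv.swap a b be a transposition of Fin n (a ≠ b). Then for every k : ℕ, the number of fixed points of σ^{⊙k}, as an integer, equals the alternating sum ∑_{ℓ=0}^{k} (−1)^ℓ * multichoose (n − 1) (k − ℓ). -/
/-!
A multiset is fixed by `Sym.map (swap a b)` exactly when it contains `a` and `b` equally often.
Such a balanced multiset of size `k` either avoids both `a` and `b` (there are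
`multichoose (n - 2) k` of those) or contains the pair `{a, b}`, whose removal leaves a balanced
multiset of size `k - 2`. Hence the fixed-point counts satisfy
`F (k + 2) = F k + multichoose (n - 2) (k + 2)` with `F 0 = 1` and `F 1 = n - 2`; the alternating
sum obeys the same recursion by Pascal's rule for `multichoose`, and has the same initial values.
-/

open Finset

theorem Multiset.map_swap_eq_self_iff {α : Type*} [DecidableEq α] {a b : α} {m : Multiset α} :
    m.map (Equiv.swap a b) = m ↔ m.count a = m.count b := by
  have count_map (x : α) : (m.map (Equiv.swap a b)).count x = m.count (Equiv.swap a b x) := by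
    simpa using m.count_map_eq_count' _ (Equiv.swap a b).injective (Equiv.swap a b x)
  constructor
  · intro h
    simpa [h] using count_map a
  · intro h
    ext x
    rw [count_map]
    rcases eq_or_ne x a with rfl | hxa
    · simp [h]
    rcases eq_or_ne x b with rfl | hxb
    · simp [h]
    · rw [Equiv.swap_apply_of_ne_of_ne hxa hxb]

theorem Sym.card_subtype_forall_mem {α : Type*} [Fintype α] [DecidableEq α] (p : α → Prop)
    [DecidablePred p] (k : ℕ) :
    Fintype.card {s : Sym α k // ∀ x ∈ s, p x} = (Fintype.card {x // p x}).multichoose k := by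
  rw [← Sym.card_sym_eq_multichoose]
  refine (Fintype.card_of_bijective
    (f := fun t : Sym {x // p x} k => ⟨t.map Subtype.val, by simp +contextual⟩)
    ⟨?_, ?_⟩).symm
  · exact fun t u h => Sym.map_injective Subtype.val_injective k (congrArg Subtype.val h)
  · rintro ⟨s, hs⟩
    refine ⟨s.attach.map fun x => ⟨x.1, hs x.1 x.2⟩, Subtype.ext ?_⟩
    simp only [Sym.map_map]
    exact s.attach_map_coe

theorem sum_range_succ_neg_one_pow_mul {R : Type*} [CommRing R] (f : ℕ → R) (k : ℕ) :
    ∑ ℓ ∈ range (k + 2), (-1) ^ ℓ * f (k + 1 - ℓ) =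
      f (k + 1) - ∑ ℓ ∈ range (k + 1), (-1) ^ ℓ * f (k - ℓ) := by
  rw [sum_range_succ', sub_eq_neg_add, ← sum_neg_distrib]
  simp [pow_succ]

section Balanced

variable {α : Type*} [Fintype α] [DecidableEq α] {a b : α} {k : ℕ}

def balancedSym (a b : α) (k : ℕ) : Finset (Sym α k) :=
  {s | (s : Multiset α).count a = (s : Multiset α).count b}

@[simp]
theorem mem_balancedSym {s : Sym α k} :
    s ∈ balancedSym a b k ↔ (s : Multiset α).count a = (s : Multiset α).count b := by
  simp [balancedSym]

theorem mem_of_mem_balancedSym {s : Sym α k} (hs : s ∈ balancedSym a b k) (ha : a ∈ s) :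
    b ∈ s := by
  rw [← Sym.mem_coe, ← Multiset.count_pos, ← mem_balancedSym.1 hs, Multiset.count_pos]
  exact ha

theorem two_le_of_mem_balancedSym (hab : a ≠ b) {s : Sym α k} (hs : s ∈ balancedSym a b k)
    (ha : a ∈ s) : 2 ≤ k := by
  have hpair : ({a, b} : Multiset α) ≤ s :=
    (Multiset.le_iff_subset (by simpa using hab)).2 <| by
      simpa [Multiset.insert_eq_cons, Multiset.cons_subset] using
        ⟨ha, mem_of_mem_balancedSym hs ha⟩
  simpa using Multiset.card_le_card hpair

theorem cons_cons_mem_balancedSym_iff (hab : a ≠ b) {s : Sym α k} :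
    a ::ₛ b ::ₛ s ∈ balancedSym a b (k + 2) ↔ s ∈ balancedSym a b k := by
  simp [Sym.coe_cons, hab, hab.symm]

theorem filter_mem_balancedSym_add_two (hab : a ≠ b) (k : ℕ) :
    {s ∈ balancedSym a b (k + 2) | a ∈ s} =
      (balancedSym a b k).map ⟨fun s => a ::ₛ b ::ₛ s, fun s t h => by simpa using h⟩ := by
  ext s
  simp only [mem_filter, mem_map]
  constructor
  · rintro ⟨hs, ha⟩
    obtain ⟨t, rfl⟩ := Sym.exists_cons_of_mem ha
    obtain ⟨u, rfl⟩ := Sym.exists_cons_of_mem <|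
      (Sym.mem_cons.1 (mem_of_mem_balancedSym hs ha)).resolve_left hab.symm
    exact ⟨u, (cons_cons_mem_balancedSym_iff hab).1 hs, rfl⟩
  · rintro ⟨u, hu, rfl⟩
    exact ⟨(cons_cons_mem_balancedSym_iff hab).2 hu, Sym.mem_cons_self _ _⟩

theorem card_filter_not_mem_balancedSym (hab : a ≠ b) (k : ℕ) :
    #{s ∈ balancedSym a b k | a ∉ s} = (Fintype.card α - 2).multichoose k := by
  have avoid_iff (s : Sym α k) :
      (s : Multiset α).count a = (s : Multiset α).count b ∧ a ∉ s ↔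
        ∀ x ∈ s, x ∉ ({a, b} : Finset α) := by
    have forall_not_mem_pair :
        (∀ x ∈ s, x ∉ ({a, b} : Finset α)) ↔ a ∉ s ∧ b ∉ s := by
      simp only [mem_insert, mem_singleton, not_or]
      exact ⟨fun h => ⟨fun ha => (h a ha).1 rfl, fun hb => (h b hb).2 rfl⟩,
        fun h x hx => ⟨ne_of_mem_of_not_mem hx h.1, ne_of_mem_of_not_mem hx h.2⟩⟩
    rw [forall_not_mem_pair, ← Sym.mem_coe, ← Sym.mem_coe, ← Multiset.count_eq_zero,
      ← Multiset.count_eq_zero]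
    omega
  rw [balancedSym, filter_filter, filter_congr fun s _ => avoid_iff s, ← Fintype.card_subtype,
    Sym.card_subtype_forall_mem, Fintype.card_subtype_compl, Fintype.card_coe, card_pair hab]

theorem card_balancedSym (hab : a ≠ b) (k : ℕ) :
    #(balancedSym a b k) =
      #{s ∈ balancedSym a b k | a ∈ s} + (Fintype.card α - 2).multichoose k := by
  rw [← card_filter_add_card_filter_not (a ∈ ·), card_filter_not_mem_balancedSym hab]

theorem card_balancedSym_add_two (hab : a ≠ b) (k : ℕ) :
    #(balancedSym a b (k + 2)) =
      #(balancedSym a b k) + (Fintype.card α - 2).multichoose (k + 2) := by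
  rw [card_balancedSym hab, filter_mem_balancedSym_add_two hab, card_map]

theorem card_balancedSym_of_lt_two (hab : a ≠ b) (hk : k < 2) :
    #(balancedSym a b k) = (Fintype.card α - 2).multichoose k := by
  rw [card_balancedSym hab, filter_eq_empty_iff.2 fun s hs ha =>
    (two_le_of_mem_balancedSym hab hs ha).not_gt hk, card_empty, zero_add]

end Balanced

theorem fixCount_symPow_swap_eq_card_balancedSym {n : ℕ} (a b : Fin n) (k : ℕ) :
    fixCount ((Equiv.swap a b).symPow k) = #(balancedSym a b k) := by
  rw [fixCount, Fintype.card_subtype, balancedSym]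
  refine congrArg card (filter_congr fun s _ => ?_)
  rw [← Sym.coe_inj]
  exact Multiset.map_swap_eq_self_iff

/-- Alternating-sum formula for the number of fixed points of the symmetric tensor power of a
transposition. -/
theorem fixCount_symPow_swap (n : ℕ) (hn : 2 ≤ n) (a b : Fin n) (hab : a ≠ b) (k : ℕ) :
    (fixCount ((Equiv.swap a b).symPow k) : ℤ) =
      ∑ ℓ ∈ Finset.range (k + 1),
        (-1 : ℤ) ^ ℓ * (Nat.multichoose (n - 1) (k - ℓ) : ℤ) := by
  have pascal (j : ℕ) :
      (n - 1).multichoose (j + 1) = (n - 2).multichoose (j + 1) + (n - 1).multichoose j := by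
    obtain ⟨m, rfl⟩ : ∃ m, n = m + 2 := ⟨n - 2, by omega⟩
    exact Nat.multichoose_succ_succ m j
  rw [fixCount_symPow_swap_eq_card_balancedSym]
  induction k using Nat.twoStepInduction with
  | zero => simp [card_balancedSym_of_lt_two hab]
  | one =>
    rw [card_balancedSym_of_lt_two hab one_lt_two, Fintype.card_fin]
    simp only [sum_range_succ, range_one, sum_singleton, tsub_zero, tsub_self, pow_zero, pow_one,
      Nat.multichoose_one_right, Nat.multichoose_zero_right]
    omega
  | more k ih _ =>
    let f (i : ℕ) : ℤ := (n - 1).multichoose i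
    rw [card_balancedSym_add_two hab, Fintype.card_fin, Nat.cast_add, ih,
      sum_range_succ_neg_one_pow_mul f (k + 1), sum_range_succ_neg_one_pow_mul f k]
    simp only [f, pascal]
    push_cast
    ring
end

section
/- Let ℓ ≥ 2 and let σ be a permutation of Fin ℓ which is a cycle of length ℓ (σ.IsCycle and σ.support.card = ℓ). Then for every k ≥ 1, the number of fixed points of σ^{⊙k} on Sym (Fin ℓ) k equals 1 if ℓ divides k, and equals 0 otherwise. -/
/-- The symmetric tensor power of a full cycle on `Fin ℓ` has exactly one fixed point when
`ℓ ∣ k` and none otherwise. -/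
theorem fixCount_symPow_fullCycle (ℓ : ℕ) (hℓ : 2 ≤ ℓ) (σ : Equiv.Perm (Fin ℓ))
    (hc : σ.IsCycle) (hs : σ.support.card = ℓ) (k : ℕ) (hk : 1 ≤ k) :
    fixCount (σ.symPow k) = if ℓ ∣ k then 1 else 0 := by
  classical
  have hℓ0 : 0 < ℓ := by omega
  have hsupp : σ.support = Finset.univ := by
    apply Finset.eq_univ_of_card; simp [hs]
  have hmem : ∀ x : Fin ℓ, σ x ≠ x := by
    intro x
    have : x ∈ σ.support := hsupp ▸ Finset.mem_univ x
    exact Equiv.Perm.mem_support.mp this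
  -- fixed points have constant count
  have key : ∀ m : Sym (Fin ℓ) k, (σ.symPow k) m = m →
      ∀ x y : Fin ℓ, Multiset.count x m.1 = Multiset.count y m.1 := by
    intro m hm x y
    have h1 : Multiset.map σ m.1 = m.1 := congrArg Subtype.val hm
    have hstep : ∀ (j : ℕ) (z : Fin ℓ), Multiset.count ((σ ^ j) z) m.1 = Multiset.count z m.1 := by
      intro j
      induction j with
      | zero => simp
      | succ n ih =>
        intro z
        have := Multiset.count_map_eq_count' σ m.1 σ.injective ((σ ^ n) z)
        rw [h1] at this
        calc Multiset.count ((σ ^ (n+1)) z) m.1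
            = Multiset.count (σ ((σ ^ n) z)) m.1 := by
              rw [pow_succ', Equiv.Perm.mul_apply]
          _ = Multiset.count ((σ ^ n) z) m.1 := this
          _ = Multiset.count z m.1 := ih z
    obtain ⟨j, hj⟩ := hc.exists_pow_eq (hmem x) (hmem y)
    rw [← hj, hstep]
  -- card as sum of counts
  have hsum : ∀ m : Sym (Fin ℓ) k, ∑ x : Fin ℓ, Multiset.count x m.1 = k := by
    intro m
    have h0 : ∑ x : Fin ℓ, Multiset.count x m.1 = Multiset.card m.1 := by
      rw [← Multiset.toFinset_sum_count_eq m.1]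
      refine (Finset.sum_subset (Finset.subset_univ m.1.toFinset) ?_).symm
      intro x _ hx
      exact Multiset.count_eq_zero.mpr (fun h => hx (Multiset.mem_toFinset.mpr h))
    rw [h0, m.2]
  have hdvd : ∀ m : Sym (Fin ℓ) k, (σ.symPow k) m = m → ℓ ∣ k := by
    intro m hm
    obtain ⟨x⟩ : Nonempty (Fin ℓ) := ⟨⟨0, hℓ0⟩⟩
    refine ⟨Multiset.count x m.1, ?_⟩
    have := hsum m
    rw [Finset.sum_congr rfl (fun y _ => key m hm y x)] at this
    simpa [mul_comm] using this.symm
  by_cases hd : ℓ ∣ k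
  · simp only [hd, if_pos]
    obtain ⟨c, hck⟩ := hd
    have hcard : Multiset.card (c • (Finset.univ : Finset (Fin ℓ)).val) = k := by
      simp [hck, mul_comm]
    set m₀ : Sym (Fin ℓ) k := ⟨c • (Finset.univ : Finset (Fin ℓ)).val, hcard⟩ with hm₀
    have hfix : (σ.symPow k) m₀ = m₀ := by
      apply Subtype.ext
      show Multiset.map σ (c • (Finset.univ : Finset (Fin ℓ)).val) = _
      rw [Multiset.map_nsmul]
      congr 1
      have := Finset.map_univ_equiv σ
      calc Multiset.map σ (Finset.univ : Finset (Fin ℓ)).val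
          = ((Finset.univ : Finset (Fin ℓ)).map σ.toEmbedding).val := rfl
        _ = (Finset.univ : Finset (Fin ℓ)).val := by rw [this]
    rw [fixCount, Fintype.card_eq_one_iff]
    refine ⟨⟨m₀, hfix⟩, ?_⟩
    rintro ⟨m, hm⟩
    apply Subtype.ext
    apply Subtype.ext
    apply Multiset.ext.mpr
    intro x
    show Multiset.count x m.1 = Multiset.count x m₀.1
    -- both have constant counts summing to k
    have h1 := hsum m
    have h2 := hsum m₀
    rw [Finset.sum_congr rfl (fun y _ => key m hm y x)] at h1
    rw [Finset.sum_congr rfl (fun y _ => key m₀ hfix y x)] at h2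
    simp only [Finset.sum_const, Finset.card_univ, Fintype.card_fin, smul_eq_mul] at h1 h2
    exact Nat.eq_of_mul_eq_mul_left hℓ0 (h1.trans h2.symm)
  · simp only [hd, if_neg, not_false_iff]
    rw [fixCount, Fintype.card_eq_zero_iff]
    exact ⟨fun ⟨m, hm⟩ => hd (hdvd m hm)⟩
end

section
/- Let ℓ ≥ 2, n > ℓ and k > 1. Let σ be an ℓ-cycle in the permutations of Fin n and σ' an ℓ-cycle in the permutations of Fin (n−1). Then the numbers of fixed points satisfy the recursion Fix(σ^{⊙k}) = Fix(σ'^{⊙k}) + Fix(σ^{⊙(k−1)}). -/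
lemma fixCount_symPow_eq_card {n k : ℕ} (σ : Equiv.Perm (Fin n)) :
    fixCount (σ.symPow k) = Fintype.card {m : Sym (Fin n) k // Sym.map σ m = m} := by
  unfold fixCount
  exact Fintype.card_congr (Equiv.subtypeEquivRight fun _ => Iff.rfl)

lemma fixCount_symPow_conj {n k : ℕ} {σ τ : Equiv.Perm (Fin n)} (h : IsConj σ τ) :
    fixCount (σ.symPow k) = fixCount (τ.symPow k) := by
  obtain ⟨π, hπ⟩ := isConj_iff.mp h
  rw [fixCount_symPow_eq_card, fixCount_symPow_eq_card]
  apply Fintype.card_congr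
  refine Equiv.subtypeEquiv (Sym.equivCongr π) fun m => ?_
  have hcomm : ⇑τ ∘ ⇑π = ⇑π ∘ ⇑σ := by
    funext y
    have := congrArg (fun ρ : Equiv.Perm (Fin n) => ρ (π y)) hπ
    simpa [Equiv.Perm.mul_apply] using this.symm
  have key : ∀ m : Sym (Fin n) k, Sym.map τ (Sym.map π m) = Sym.map π (Sym.map σ m) := by
    intro m; rw [Sym.map_map, Sym.map_map, hcomm]
  constructor
  · intro hm
    show Sym.map τ (Sym.map π m) = Sym.map π m
    rw [key, hm]
  · intro hm
    have h2 : Sym.map π (Sym.map σ m) = Sym.map π m := by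
      rw [← key]; exact hm
    exact (Sym.equivCongr π).injective h2

lemma card_fixed_decomp {n k : ℕ} (hk : 1 ≤ k) (hn : 2 ≤ n) (x : Fin n)
    (e : Fin (n - 1) ≃ {y : Fin n // y ≠ x}) (σ' : Equiv.Perm (Fin (n - 1))) :
    Fintype.card {m : Sym (Fin n) k // Sym.map (σ'.extendDomain e) m = m} =
      Fintype.card {m' : Sym (Fin (n - 1)) k // Sym.map σ' m' = m'} +
        Fintype.card {m₀ : Sym (Fin n) (k - 1) // Sym.map (σ'.extendDomain e) m₀ = m₀} := by
  classical
  set τ : Equiv.Perm (Fin n) := σ'.extendDomain e with hτdef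
  have hτx : τ x = x := Equiv.Perm.extendDomain_apply_not_subtype σ' e (not_not_intro rfl)
  have hτne : ∀ y : Fin n, y ≠ x → τ y ≠ x := fun y hy h =>
    hy (τ.injective (h.trans hτx.symm))
  have hτy : ∀ (y : Fin n) (hy : y ≠ x),
      τ y = ((e (σ' (e.symm ⟨y, hy⟩)) : {y : Fin n // y ≠ x}) : Fin n) :=
    fun y hy => Equiv.Perm.extendDomain_apply_subtype σ' e hy
  have hpos : 0 < n - 1 := by omega
  set g : Fin n → Fin (n - 1) := fun y => if h : y = x then ⟨0, hpos⟩ else e.symm ⟨y, h⟩ with hg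
  set f : Fin (n - 1) → Fin n := fun z => ((e z : {y : Fin n // y ≠ x}) : Fin n) with hf
  have hfg : ∀ y : Fin n, y ≠ x → f (g y) = y := by
    intro y hy; simp [hg, hf, dif_neg hy]
  have hgf : ∀ z : Fin (n - 1), g (f z) = z := by
    intro z
    have hz : f z ≠ x := (e z).2
    simp only [hg, dif_neg hz, hf]
    rw [dif_neg (show ((e z : {y : Fin n // y ≠ x}) : Fin n) ≠ x from hz)]
    exact e.symm_apply_apply z
  have hfx : ∀ z : Fin (n - 1), f z ≠ x := fun z => (e z).2
  have hgτ : ∀ (y : Fin n), y ≠ x → g (τ y) = σ' (g y) := by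
    intro y hy
    have h1 : τ y ≠ x := hτne y hy
    simp only [hg, dif_neg h1, dif_neg hy]
    have h2 : (⟨τ y, h1⟩ : {y : Fin n // y ≠ x}) = e (σ' (e.symm ⟨y, hy⟩)) :=
      Subtype.ext (hτy y hy)
    rw [h2, Equiv.symm_apply_apply]
  have hτf : ∀ z : Fin (n - 1), τ (f z) = f (σ' z) := by
    intro z
    have hz : f z ≠ x := hfx z
    rw [hτy (f z) hz]
    simp only [hf]
    congr 2
    rw [Subtype.coe_eta, Equiv.symm_apply_apply]
  -- condition translation
  have hcond : ∀ {j : ℕ} (ρ : Equiv.Perm (Fin n)) (s : Sym (Fin n) j),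
      Sym.map ρ s = s ↔ Multiset.map ρ (↑s) = ↑s := by
    intro j ρ s
    rw [← Sym.coe_inj, Sym.coe_map]
  have hcond' : ∀ (s : Sym (Fin (n - 1)) k),
      Sym.map σ' s = s ↔ Multiset.map σ' (↑s) = ↑s := by
    intro s
    rw [← Sym.coe_inj, Sym.coe_map]
  rw [← Fintype.card_sum]
  apply Fintype.card_congr
  refine
    { toFun := fun m =>
        if hx : x ∈ (↑m.1 : Multiset (Fin n)) then
          Sum.inr ⟨⟨(↑m.1 : Multiset (Fin n)).erase x, by
            have hc : Multiset.card (↑m.1 : Multiset (Fin n)) = k := Sym.card_coe (s := m.1)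
            rw [Multiset.card_erase_of_mem hx, hc]; rfl⟩, by
            apply (hcond _ _).mpr
            show Multiset.map τ ((↑m.1 : Multiset (Fin n)).erase x) =
              (↑m.1 : Multiset (Fin n)).erase x
            rw [Multiset.map_erase τ τ.injective x, hτx, (hcond τ m.1).mp m.2]⟩
        else
          Sum.inl ⟨⟨Multiset.map g (↑m.1), by
            rw [Multiset.card_map]; exact Sym.card_coe (s := m.1)⟩, by
            apply (hcond' _).mpr
            show Multiset.map σ' (Multiset.map g (↑m.1 : Multiset (Fin n))) =
              Multiset.map g (↑m.1 : Multiset (Fin n))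
            have hmm := (hcond τ m.1).mp m.2
            calc Multiset.map σ' (Multiset.map g (↑m.1 : Multiset (Fin n)))
                = Multiset.map (σ' ∘ g) (↑m.1 : Multiset (Fin n)) := Multiset.map_map _ _ _
              _ = Multiset.map (g ∘ τ) (↑m.1 : Multiset (Fin n)) := by
                  apply Multiset.map_congr rfl
                  intro y hy
                  have hyx : y ≠ x := fun h => hx (h ▸ hy)
                  simp only [Function.comp_apply]
                  exact (hgτ y hyx).symm
              _ = Multiset.map g (Multiset.map τ (↑m.1 : Multiset (Fin n))) :=
                  (Multiset.map_map _ _ _).symm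
              _ = Multiset.map g (↑m.1 : Multiset (Fin n)) := by rw [hmm]⟩,
      invFun := fun m =>
        match m with
        | Sum.inl m' =>
          ⟨⟨Multiset.map f (↑m'.1 : Multiset (Fin (n - 1))), by
              rw [Multiset.card_map]; exact Sym.card_coe (s := m'.1)⟩, by
            apply (hcond _ _).mpr
            show Multiset.map τ (Multiset.map f (↑m'.1 : Multiset (Fin (n - 1)))) =
              Multiset.map f (↑m'.1 : Multiset (Fin (n - 1)))
            have hmm := (hcond' m'.1).mp m'.2
            calc Multiset.map τ (Multiset.map f (↑m'.1 : Multiset (Fin (n - 1))))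
                = Multiset.map (τ ∘ f) (↑m'.1 : Multiset (Fin (n - 1))) := Multiset.map_map _ _ _
              _ = Multiset.map (f ∘ σ') (↑m'.1 : Multiset (Fin (n - 1))) := by
                  apply Multiset.map_congr rfl
                  intro z _
                  simp only [Function.comp_apply]
                  exact hτf z
              _ = Multiset.map f (Multiset.map σ' (↑m'.1 : Multiset (Fin (n - 1)))) :=
                  (Multiset.map_map _ _ _).symm
              _ = Multiset.map f (↑m'.1 : Multiset (Fin (n - 1))) := by rw [hmm]⟩
        | Sum.inr m₀ =>
          ⟨⟨x ::ₘ (↑m₀.1 : Multiset (Fin n)), by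
              have hc : Multiset.card (↑m₀.1 : Multiset (Fin n)) = k - 1 := Sym.card_coe (s := m₀.1)
              rw [Multiset.card_cons, hc]
              omega⟩, by
            apply (hcond _ _).mpr
            show Multiset.map τ (x ::ₘ (↑m₀.1 : Multiset (Fin n))) =
              x ::ₘ (↑m₀.1 : Multiset (Fin n))
            rw [Multiset.map_cons, hτx, (hcond τ m₀.1).mp m₀.2]⟩,
      left_inv := by
        rintro ⟨m, hm⟩
        by_cases hx : x ∈ (↑m : Multiset (Fin n))
        · simp only [dif_pos hx]
          apply Subtype.ext; apply Sym.ext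
          show x ::ₘ (↑m : Multiset (Fin n)).erase x = ↑m
          exact Multiset.cons_erase hx
        · simp only [dif_neg hx]
          apply Subtype.ext; apply Sym.ext
          show Multiset.map f (Multiset.map g (↑m : Multiset (Fin n))) = ↑m
          rw [Multiset.map_map]
          conv_rhs => rw [← Multiset.map_id (↑m : Multiset (Fin n))]
          apply Multiset.map_congr rfl
          intro y hy
          have hyx : y ≠ x := fun h => hx (h ▸ hy)
          exact hfg y hyx,
      right_inv := by
        rintro (⟨m', hm'⟩ | ⟨m₀, hm₀⟩)
        · have hnx : x ∉ Multiset.map f (↑m' : Multiset (Fin (n - 1))) := by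
            intro h
            obtain ⟨z, _, hz⟩ := Multiset.mem_map.mp h
            exact hfx z hz
          dsimp only
          split_ifs with h
          · exact absurd h hnx
          congr 1
          apply Subtype.ext; apply Sym.ext
          show Multiset.map g (Multiset.map f (↑m' : Multiset (Fin (n - 1)))) = ↑m'
          rw [Multiset.map_map]
          conv_rhs => rw [← Multiset.map_id (↑m' : Multiset (Fin (n - 1)))]
          apply Multiset.map_congr rfl
          intro z _
          exact hgf z
        · have hx : x ∈ x ::ₘ (↑m₀ : Multiset (Fin n)) := Multiset.mem_cons_self x _
          dsimp only
          split_ifs with h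
          swap
          · exact absurd hx h
          congr 1
          apply Subtype.ext; apply Sym.ext
          show (x ::ₘ (↑m₀ : Multiset (Fin n))).erase x = ↑m₀
          exact Multiset.erase_cons_head x _ }

/-- Recursion for the number of fixed points of the symmetric tensor power of an `ℓ`-cycle. -/
theorem fixCount_symPow_cycle_recursion (ℓ n k : ℕ) (hℓ : 2 ≤ ℓ) (hn : ℓ < n) (hk : 1 < k)
    (σ : Equiv.Perm (Fin n)) (hc : σ.IsCycle) (hs : σ.support.card = ℓ)
    (σ' : Equiv.Perm (Fin (n - 1))) (hc' : σ'.IsCycle) (hs' : σ'.support.card = ℓ) :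
    fixCount (σ.symPow k) = fixCount (σ'.symPow k) + fixCount (σ.symPow (k - 1)) := by
  classical
  have hn2 : 2 ≤ n := by omega
  have hnpos : 0 < n := by omega
  set x : Fin n := ⟨0, hnpos⟩ with hx
  have hcard : Fintype.card {y : Fin n // y ≠ x} = n - 1 := by
    simp [Fintype.card_subtype_compl]
  have e : Fin (n - 1) ≃ {y : Fin n // y ≠ x} :=
    (Fintype.equivFinOfCardEq hcard).symm
  set τ : Equiv.Perm (Fin n) := σ'.extendDomain e with hτdef
  have hτc : τ.IsCycle := hc'.extendDomain e
  have hτs : τ.support.card = ℓ := by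
    rw [hτdef, Equiv.Perm.card_support_extend_domain]; exact hs'
  have hconj : IsConj σ τ := hc.isConj hτc (by rw [hs, hτs])
  rw [fixCount_symPow_conj hconj, fixCount_symPow_conj (k := k - 1) hconj]
  rw [fixCount_symPow_eq_card, fixCount_symPow_eq_card, fixCount_symPow_eq_card]
  exact card_fixed_decomp (by omega) hn2 x e σ'
end

section
/- Let n and k be positive integers and let σ be any permutation of Fin n. Then the number of fixed points of σ^{⊙k} equals ∑ ∏_{ℓ=1}^{n} multichoose (C_ℓ(σ)) (s_ℓ), where the sum ranges over all tuples (s_1, …, s_n) of natural numbers satisfying s_1 + 2 s_2 + ⋯ + n s_n = k, and C_ℓ(σ) is the number of cycles of length ℓ in the cycle decomposition of σ. -/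
/-!
A multiset on `Fin n` is fixed by `σ^{⊙k}` exactly when its multiplicity function is invariant
under `σ`, i.e. factors through the set of orbits of `σ`. Fixed points therefore correspond to
functions `g` on orbits with `∑ |O| g(O) = k`. Grouping the orbits by length and recording
`s_ℓ = ∑_{|O| = ℓ} g(O)`, the constraint becomes `∑ ℓ s_ℓ = k`, and for fixed `s` the values on
the `C_ℓ(σ)` orbits of length `ℓ` are independent: a multiset of size `s_ℓ` on `C_ℓ(σ)` elements.
-/

open Finset Equiv Equiv.Perm

theorem Multiset.map_perm_eq_self_iff {α : Type*} [DecidableEq α] (σ : Perm α)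
    {m : Multiset α} : m.map σ = m ↔ ∀ x, m.count (σ x) = m.count x := by
  rw [Multiset.ext, σ.surjective.forall]
  simp only [Multiset.count_map_eq_count' σ m σ.injective, eq_comm]

section CountingFunctions

variable {ι κ : Type*} [Fintype ι] [Fintype κ] [DecidableEq κ]

instance (m : ℕ) : Finite {g : ι → ℕ // ∑ i, g i = m} := by
  classical exact Finite.of_equiv _ (Sym.equivNatSumOfFintype ι m)

theorem natCard_sum_eq_multichoose (m : ℕ) :
    Nat.card {g : ι → ℕ // ∑ i, g i = m} = (Nat.card ι).multichoose m := by
  classical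
  rw [← Nat.card_congr (Sym.equivNatSumOfFintype ι m), Nat.card_eq_fintype_card,
    Sym.card_sym_eq_multichoose, Nat.card_eq_fintype_card]

def fiberSumsEquiv (c : ι → κ) (s : κ → ℕ) :
    {g : ι → ℕ // (fun j => ∑ i : {i // c i = j}, g i) = s} ≃
      Π j, {h : {i // c i = j} → ℕ // ∑ i, h i = s j} :=
  let curry : (ι → ℕ) ≃ Π j, ({i // c i = j} → ℕ) :=
    ((sigmaFiberEquiv c).symm.arrowCongr (Equiv.refl ℕ)).trans (piCurry fun _ _ => ℕ)
  (curry.subtypeEquiv fun _ => funext_iff).trans subtypePiEquivPi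

instance (c : ι → κ) (s : κ → ℕ) :
    Finite {g : ι → ℕ // (fun j => ∑ i : {i // c i = j}, g i) = s} :=
  Finite.of_equiv _ (fiberSumsEquiv c s).symm

theorem natCard_fiberSums_eq (c : ι → κ) (s : κ → ℕ) :
    Nat.card {g : ι → ℕ // (fun j => ∑ i : {i // c i = j}, g i) = s} =
      ∏ j, (Nat.card {i // c i = j}).multichoose (s j) := by
  rw [Nat.card_congr (fiberSumsEquiv c s), Nat.card_pi]
  exact prod_congr rfl fun j _ => natCard_sum_eq_multichoose (s j)

theorem natCard_weightedSum_eq (c : ι → κ) (a : κ → ℕ) (ha : ∀ j, 0 < a j) (k : ℕ) :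
    Nat.card {g : ι → ℕ // ∑ i, a (c i) * g i = k} =
      ∑ s ∈ (Fintype.piFinset fun _ : κ => range (k + 1)).filter
          (fun s => ∑ j, a j * s j = k),
        ∏ j, (Nat.card {i // c i = j}).multichoose (s j) := by
  set S := (Fintype.piFinset fun _ : κ => range (k + 1)).filter (fun s => ∑ j, a j * s j = k)
  let fiberSums (g : ι → ℕ) (j : κ) : ℕ := ∑ i : {i // c i = j}, g i
  have weightedSum_eq (g : ι → ℕ) : ∑ i, a (c i) * g i = ∑ j, a j * fiberSums g j := by
    rw [← Fintype.sum_fiberwise c]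
    refine sum_congr rfl fun j _ => ?_
    rw [mul_sum]
    exact sum_congr rfl fun i _ => by rw [i.2]
  have mem_S (g : ι → ℕ) : ∑ i, a (c i) * g i = k ↔ fiberSums g ∈ S := by
    rw [weightedSum_eq, mem_filter, Fintype.mem_piFinset, iff_and_self]
    intro hk j
    rw [mem_range, Nat.lt_succ_iff, ← hk]
    calc fiberSums g j ≤ a j * fiberSums g j := Nat.le_mul_of_pos_left _ (ha j)
      _ ≤ ∑ j, a j * fiberSums g j :=
        single_le_sum (f := fun j => a j * fiberSums g j) (fun _ _ => Nat.zero_le _) (mem_univ j)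
  rw [← Nat.card_congr (sigmaSubtypeFiberEquivSubtype fiberSums mem_S), Nat.card_sigma,
    ← sum_coe_sort S]
  exact sum_congr rfl fun s _ => natCard_fiberSums_eq c s

end CountingFunctions

namespace Equiv.Perm

variable {α : Type*} (σ : Perm α)

/-- The orbits of `σ`: its cycles together with its fixed points. -/
abbrev Orbits : Type _ := Quotient (SameCycle.setoid σ)

noncomputable def orbitSize (q : σ.Orbits) : ℕ := Nat.card {x // Quotient.mk _ x = q}

theorem orbitSize_mk (x : α) :
    σ.orbitSize (Quotient.mk _ x) = Nat.card {y // σ.SameCycle y x} :=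
  Nat.card_congr (subtypeEquivRight fun _ => Quotient.eq)

theorem orbitSize_mk_of_apply_eq {x : α} (hx : σ x = x) : σ.orbitSize (Quotient.mk _ x) = 1 := by
  rw [orbitSize_mk, Nat.card_eq_one_iff_exists]
  exact ⟨⟨x, SameCycle.refl σ x⟩, fun y => Subtype.ext (y.2.symm.eq_of_left hx).symm⟩

theorem apply_ne_of_two_le_orbitSize {x : α} (hx : 2 ≤ σ.orbitSize (Quotient.mk _ x)) :
    σ x ≠ x := fun hfix => by
  rw [orbitSize_mk_of_apply_eq σ hfix] at hx
  omega

section Finite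

variable [Finite α]

theorem one_le_orbitSize (q : σ.Orbits) : 1 ≤ σ.orbitSize q := by
  obtain ⟨x, rfl⟩ := Quotient.exists_rep q
  have : Nonempty {y // Quotient.mk (SameCycle.setoid σ) y = Quotient.mk _ x} := ⟨⟨x, rfl⟩⟩
  exact Nat.card_pos

theorem orbitSize_le_card (q : σ.Orbits) : σ.orbitSize q ≤ Nat.card α :=
  Finite.card_subtype_le _

variable {σ} in
theorem SameCycle.apply_eq_apply {β : Type*} {f : α → β} (hf : f ∘ σ = f) {x y : α}
    (h : σ.SameCycle x y) : f x = f y := by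
  obtain ⟨i, -, rfl⟩ := h.exists_pow_eq'
  rw [coe_pow]
  exact (congrFun (Function.iterate_invariant hf i) x).symm

def invariantFunEquiv (β : Type*) : {f : α → β // f ∘ σ = f} ≃ (σ.Orbits → β) where
  toFun f := Quotient.lift f.1 fun _ _ h => SameCycle.apply_eq_apply f.2 h
  invFun g := ⟨fun x => g (Quotient.mk _ x),
    funext fun x => congrArg g (Quotient.sound (sameCycle_apply_left.2 (SameCycle.refl σ x)))⟩
  left_inv _ := rfl
  right_inv _ := funext fun q => Quotient.inductionOn q fun _ => rfl

end Finite

variable [Fintype α] [DecidableEq α]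

instance : DecidableRel (SameCycle.setoid σ).r := inferInstanceAs (DecidableRel σ.SameCycle)

noncomputable def fixedSymEquiv (k : ℕ) :
    {m : Sym α k // m.map σ = m} ≃ {f : α → ℕ // ∑ x, f x = k ∧ f ∘ σ = f} :=
  ((Sym.equivNatSumOfFintype α k).subtypeEquiv fun m => by
    rw [← Sym.coe_inj, Sym.coe_map, Multiset.map_perm_eq_self_iff σ, funext_iff]
    rfl).trans (subtypeSubtypeEquivSubtypeInter _ _)

theorem sum_comp_mk {M : Type*} [AddCommMonoid M] (g : σ.Orbits → M) :
    ∑ x, g (Quotient.mk _ x) = ∑ q, σ.orbitSize q • g q := by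
  rw [← Fintype.sum_fiberwise' (Quotient.mk _) g]
  simp only [sum_const, card_univ, orbitSize, Nat.card_eq_fintype_card]

def invariantSumEquiv (k : ℕ) :
    {f : α → ℕ // ∑ x, f x = k ∧ f ∘ σ = f} ≃
      {g : σ.Orbits → ℕ // ∑ q, σ.orbitSize q * g q = k} :=
  (subtypeEquivRight fun _ => and_comm).trans <|
    (subtypeSubtypeEquivSubtypeInter _ _).symm.trans <|
      (invariantFunEquiv σ ℕ).subtypeEquiv fun f => by
        rw [show ∑ x, f.1 x = _ from sum_comp_mk σ (invariantFunEquiv σ ℕ f)]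
        simp only [smul_eq_mul]

theorem orbitSize_mk_of_apply_ne {x : α} (hx : σ x ≠ x) :
    σ.orbitSize (Quotient.mk _ x) = #(σ.cycleOf x).support := by
  rw [orbitSize_mk, ← Fintype.card_coe, ← Nat.card_eq_fintype_card]
  exact Nat.card_congr
    (subtypeEquivRight fun y => by rw [mem_support_cycleOf_iff' hx, sameCycle_comm])

theorem natCard_orbitSize_eq_one : Nat.card {q // σ.orbitSize q = 1} = fixCount σ := by
  rw [fixCount, ← Nat.card_eq_fintype_card]
  symm
  refine Nat.card_congr (Equiv.ofBijective
    (fun x => ⟨Quotient.mk _ x.1, orbitSize_mk_of_apply_eq σ x.2⟩) ⟨?_, ?_⟩)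
  · intro x y hxy
    exact Subtype.ext ((Quotient.exact (congrArg Subtype.val hxy)).eq_of_left x.2)
  · rintro ⟨q, hq⟩
    induction q using Quotient.inductionOn with
    | h x =>
      by_cases hx : σ x = x
      · exact ⟨⟨x, hx⟩, rfl⟩
      · have := two_le_card_support_cycleOf_iff.mpr hx
        rw [orbitSize_mk_of_apply_ne σ hx] at hq
        omega

theorem natCard_orbitSize_eq_of_two_le {ℓ : ℕ} (hℓ : 2 ≤ ℓ) :
    Nat.card {q // σ.orbitSize q = ℓ} = #(σ.cycleFactorsFinset.filter (#·.support = ℓ)) := by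
  rw [Nat.card_eq_fintype_card, Fintype.card_subtype]
  refine card_bij
    (fun q _ => Quotient.lift σ.cycleOf (fun _ _ (h : σ.SameCycle _ _) => h.cycleOf_eq) q)
    ?_ ?_ ?_
  · intro q hq
    induction q using Quotient.inductionOn with
    | h x =>
      rw [mem_filter] at hq ⊢
      have hx := apply_ne_of_two_le_orbitSize σ (hq.2 ▸ hℓ)
      exact ⟨cycleOf_mem_cycleFactorsFinset_iff.mpr (mem_support.mpr hx),
        orbitSize_mk_of_apply_ne σ hx ▸ hq.2⟩
  · intro q₁ hq₁ q₂ hq₂ h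
    induction q₁ using Quotient.inductionOn with
    | h x =>
    induction q₂ using Quotient.inductionOn with
    | h y =>
      rw [mem_filter] at hq₁ hq₂
      have hx := apply_ne_of_two_le_orbitSize σ (hq₁.2 ▸ hℓ)
      have hy := apply_ne_of_two_le_orbitSize σ (hq₂.2 ▸ hℓ)
      exact Quotient.sound ((sameCycle_iff_cycleOf_eq_of_mem_support
        (mem_support.mpr hx) (mem_support.mpr hy)).mpr h)
  · intro c hc
    rw [mem_filter] at hc
    obtain ⟨a, ha⟩ := card_pos.mp (hc.2 ▸ (by omega : 0 < ℓ))
    have hca := cycle_is_cycleOf ha hc.1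
    have haσ := mem_cycleFactorsFinset_support_le hc.1 ha
    refine ⟨Quotient.mk _ a, ?_, hca.symm⟩
    rw [mem_filter, orbitSize_mk_of_apply_ne σ (mem_support.mp haσ), ← hca]
    exact ⟨mem_univ _, hc.2⟩

theorem natCard_orbitSize_eq_cycleCount {ℓ : ℕ} (hℓ : 1 ≤ ℓ) :
    Nat.card {q // σ.orbitSize q = ℓ} = cycleCount σ ℓ := by
  rcases hℓ.eq_or_lt with rfl | hℓ
  · rw [natCard_orbitSize_eq_one, cycleCount, if_pos rfl]
  · rw [natCard_orbitSize_eq_of_two_le σ hℓ, cycleCount, if_neg hℓ.ne']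

end Equiv.Perm

theorem fixCount_symPow_general_general (n k : ℕ)
    (σ : Equiv.Perm (Fin n)) :
    fixCount (σ.symPow k) =
      ∑ s ∈ (Fintype.piFinset fun _ : Fin n => Finset.range (k + 1)).filter
          (fun s => ∑ i : Fin n, ((i : ℕ) + 1) * s i = k),
        ∏ i : Fin n, Nat.multichoose (cycleCount σ ((i : ℕ) + 1)) (s i) := by
  let sizeClass (q : σ.Orbits) : Fin n :=
    ⟨σ.orbitSize q - 1, by
      have := σ.one_le_orbitSize q
      have := σ.orbitSize_le_card q
      rw [Nat.card_fin] at this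
      omega⟩
  have orbitSize_eq (q : σ.Orbits) : σ.orbitSize q = (sizeClass q : ℕ) + 1 :=
    (Nat.sub_add_cancel (σ.one_le_orbitSize q)).symm
  calc fixCount (σ.symPow k) = Nat.card {m : Sym (Fin n) k // m.map σ = m} :=
        Nat.card_eq_fintype_card.symm
    _ = Nat.card {g : σ.Orbits → ℕ // ∑ q, ((sizeClass q : ℕ) + 1) * g q = k} := by
        simp_rw [← orbitSize_eq]
        exact Nat.card_congr ((fixedSymEquiv σ k).trans (invariantSumEquiv σ k))
    _ = _ := by
        rw [natCard_weightedSum_eq sizeClass _ (fun _ => Nat.succ_pos _)]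
        refine sum_congr rfl fun s _ => prod_congr rfl fun i _ => ?_
        rw [← natCard_orbitSize_eq_cycleCount σ (Nat.le_add_left 1 i)]
        have : Nat.card {q // sizeClass q = i} = Nat.card {q // σ.orbitSize q = i + 1} :=
          Nat.card_congr (subtypeEquivRight fun q => by rw [orbitSize_eq, Fin.ext_iff]; omega)
        rw [this]

/-- The number of fixed points of `σ^{⊙k}` for an arbitrary permutation `σ`, as a sum over all
tuples `(s 0, …, s (n-1))` of natural numbers with `∑ (i+1) * s i = k` of
`∏ multichoose (C_{i+1}(σ)) (s i)`. -/
theorem fixCount_symPow_general (n k : ℕ) (hn : 0 < n) (hk : 0 < k)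
    (σ : Equiv.Perm (Fin n)) :
    fixCount (σ.symPow k) =
      ∑ s ∈ (Fintype.piFinset fun _ : Fin n => Finset.range (k + 1)).filter
          (fun s => ∑ i : Fin n, ((i : ℕ) + 1) * s i = k),
        ∏ i : Fin n, Nat.multichoose (cycleCount σ ((i : ℕ) + 1)) (s i) :=
  fixCount_symPow_general_general n k σ
end

section
/- Let ℓ ≥ 2 and let σ be a permutation of Fin ℓ which is a cycle of length ℓ. Let k ≥ 1 and let s be a positive integer with s ≤ ℓ. If it is not the case that (s divides ℓ and ℓ/s divides k), then σ^{⊙k} has no s-cycles, i.e., C_s(σ^{⊙k}) = 0. -/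
lemma symPow_pow {n k : ℕ} (σ : Equiv.Perm (Fin n)) (t : ℕ) :
    (σ.symPow k) ^ t = (σ ^ t).symPow k := by
  induction t with
  | zero =>
      refine Equiv.ext fun m => ?_
      show m = Sym.map (⇑(1 : Equiv.Perm (Fin n))) m
      simp [Sym.map_id']
  | succ t ih =>
      refine Equiv.ext fun m => ?_
      rw [pow_succ, Equiv.Perm.mul_apply, ih]
      show Sym.map (⇑(σ ^ t)) (Sym.map (⇑σ) m) = Sym.map (⇑(σ ^ (t+1))) m
      rw [Sym.map_map, pow_succ, Equiv.Perm.coe_mul]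

lemma symPow_pow_apply {n k : ℕ} (σ : Equiv.Perm (Fin n)) (t : ℕ) (m : Sym (Fin n) k) :
    ((σ.symPow k) ^ t) m = Sym.map (⇑(σ ^ t)) m := by
  rw [symPow_pow]; rfl

lemma key_dvd {ℓ k : ℕ} (hℓ : 0 < ℓ) (σ : Equiv.Perm (Fin ℓ)) (hc : σ.IsCycle)
    (hs : σ.support.card = ℓ) (t : ℕ) (ht : 0 < t) (htl : t ∣ ℓ)
    (m : Sym (Fin ℓ) k) (hm : Sym.map (⇑(σ ^ t)) m = m) : (ℓ / t) ∣ k := by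
  haveI : NeZero ℓ := ⟨hℓ.ne'⟩
  have hsupp : σ.support = Finset.univ := by
    apply Finset.eq_univ_of_card
    simp [hs]
  have hne : ∀ x : Fin ℓ, σ x ≠ x := by
    intro x
    have := Finset.mem_univ x
    rw [← hsupp, Equiv.Perm.mem_support] at this
    exact this
  set f : Fin ℓ → ℕ := fun x => Multiset.count x (m : Multiset (Fin ℓ)) with hf
  have hinv : ∀ x, f ((σ ^ t) x) = f x := by
    intro x
    have h0 : Multiset.count ((σ ^ t) x) (↑m : Multiset (Fin ℓ)) = Multiset.count x ↑m := by
      conv_lhs => rw [← hm]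
      show Multiset.count ((σ ^ t) x) (Multiset.map (⇑(σ ^ t)) ↑m) = Multiset.count x ↑m
      rw [Multiset.count_map_eq_count' _ _ (Equiv.injective _)]
    exact h0
  have hinv2 : ∀ (j : ℕ) (x : Fin ℓ), f ((σ ^ (t * j)) x) = f x := by
    intro j
    induction j with
    | zero => simp
    | succ j ih =>
        intro x
        have : t * (j + 1) = t * j + t := by ring
        rw [this, pow_add, Equiv.Perm.mul_apply, ih, hinv]
  have x₀ : Fin ℓ := ⟨0, hℓ⟩
  have horder : orderOf σ = ℓ := by rw [hc.orderOf, hs]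
  have hsurj : Function.Surjective (fun i : Fin ℓ => (σ ^ (i : ℕ)) x₀) := by
    intro y
    obtain ⟨i, hi⟩ := hc.exists_pow_eq (hne x₀) (hne y)
    refine ⟨⟨i % ℓ, Nat.mod_lt _ hℓ⟩, ?_⟩
    have h2 := pow_mod_orderOf σ i
    rw [horder] at h2
    simp only
    rw [h2, hi]
  have hbij := Finite.surjective_iff_bijective.mp hsurj
  have hsum : ∑ x : Fin ℓ, f x = k := by
    have h1 : ∑ x ∈ (m : Multiset (Fin ℓ)).toFinset, f x = k := by
      rw [hf]
      rw [Multiset.toFinset_sum_count_eq]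
      exact m.2
    rw [← h1]
    symm
    apply Finset.sum_subset (Finset.subset_univ _)
    intro x _ hx
    exact (Multiset.count_eq_zero.mpr (by simpa using hx))
  have hsum2 : ∑ i : Fin ℓ, f ((σ ^ (i : ℕ)) x₀) = k := by
    rw [← hsum]
    exact Equiv.sum_comp (Equiv.ofBijective _ hbij) f
  rw [Fin.sum_univ_eq_sum_range (fun i => f ((σ ^ i) x₀)) ℓ] at hsum2
  have hmod : ∀ i : ℕ, f ((σ ^ i) x₀) = f ((σ ^ (i % t)) x₀) := by
    intro i
    conv_lhs => rw [← Nat.div_add_mod i t]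
    rw [pow_add, Equiv.Perm.mul_apply, hinv2]
  set u := ℓ / t with hu
  have hltu : ℓ = t * u := (Nat.mul_div_cancel' htl).symm
  have hgen : ∀ v : ℕ, ∑ i ∈ Finset.range (t * v), f ((σ ^ (i % t)) x₀)
      = v * ∑ r ∈ Finset.range t, f ((σ ^ r) x₀) := by
    intro v
    induction v with
    | zero => simp
    | succ v ih =>
        rw [Nat.mul_succ, Finset.sum_range_add, ih, add_mul, one_mul]
        congr 1
        apply Finset.sum_congr rfl
        intro x hx
        rw [Nat.mul_add_mod, Nat.mod_eq_of_lt (Finset.mem_range.mp hx)]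
  have : u * ∑ r ∈ Finset.range t, f ((σ ^ r) x₀) = k := by
    rw [← hgen u, ← hsum2]
    apply Finset.sum_congr (by rw [hltu])
    intro i _
    exact (hmod i).symm
  exact ⟨_, this.symm⟩

/-- If it is not the case that `s ∣ ℓ` and `ℓ/s ∣ k`, the symmetric tensor power of a full
cycle on `Fin ℓ` has no `s`-cycles. -/
theorem cycleCount_symPow_fullCycle_eq_zero (ℓ : ℕ) (hℓ : 2 ≤ ℓ) (σ : Equiv.Perm (Fin ℓ))
    (hc : σ.IsCycle) (hs : σ.support.card = ℓ) (k s : ℕ) (hk : 1 ≤ k) (hs1 : 0 < s)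
    (hsl : s ≤ ℓ) (h : ¬ (s ∣ ℓ ∧ ℓ / s ∣ k)) :
    cycleCount (σ.symPow k) s = 0 := by
  have hℓ0 : 0 < ℓ := by omega
  have horder : orderOf σ = ℓ := by rw [hc.orderOf, hs]
  rw [cycleCount]
  split_ifs with h1
  · subst h1
    rw [fixCount, Fintype.card_eq_zero_iff]
    refine ⟨fun ⟨m, hm⟩ => ?_⟩
    have hmap : Sym.map (⇑(σ ^ 1)) m = m := by rw [pow_one]; exact hm
    have hd := key_dvd hℓ0 σ hc hs 1 one_pos (one_dvd ℓ) m hmap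
    exact h ⟨one_dvd ℓ, hd⟩
  · rw [Finset.card_eq_zero, Finset.filter_eq_empty_iff]
    intro c hcmem hcard
    have hcyc : c.IsCycle := (Equiv.Perm.mem_cycleFactorsFinset_iff.mp hcmem).1
    obtain ⟨x, hx⟩ : c.support.Nonempty := Finset.card_pos.mp (hcard ▸ hs1)
    have hcx : c = (σ.symPow k).cycleOf x := Equiv.Perm.cycle_is_cycleOf hx hcmem
    have hordc : orderOf c = s := by rw [hcyc.orderOf, hcard]
    have hσℓ : σ ^ ℓ = 1 := by
      have := pow_orderOf_eq_one σ
      rwa [horder] at this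
    have hτℓ : ((σ.symPow k) ^ ℓ) x = x := by
      rw [symPow_pow_apply, hσℓ]
      simp [Sym.map_id']
    have hcℓ : (c ^ ℓ) x = x := by
      rw [hcx, Equiv.Perm.cycleOf_pow_apply_self, hτℓ]
    have hcxne : c x ≠ x := Equiv.Perm.mem_support.mp hx
    have hce : c ^ ℓ = 1 := (hcyc.pow_eq_one_iff' hcxne).mpr hcℓ
    have hsdvd : s ∣ ℓ := hordc ▸ orderOf_dvd_of_pow_eq_one hce
    have hcs : c ^ s = 1 := by rw [← hordc]; exact pow_orderOf_eq_one c
    have hτs : ((σ.symPow k) ^ s) x = x := by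
      rw [← Equiv.Perm.cycleOf_pow_apply_self, ← hcx, hcs]
      rfl
    have hmap : Sym.map (⇑(σ ^ s)) x = x := by rw [← symPow_pow_apply]; exact hτs
    exact h ⟨hsdvd, key_dvd hℓ0 σ hc hs s hs1 hsdvd x hmap⟩
end

section
/- Let ℓ ≥ 2, n > ℓ, k > 1 and s ≥ 1. Let σ be an ℓ-cycle in the permutations of Fin n and σ' an ℓ-cycle in the permutations of Fin (n−1). Then the numbers of s-cycles satisfy the recursion C_s(σ^{⊙k}) = C_s(σ'^{⊙k}) + C_s(σ^{⊙(k−1)}). -/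
section Aux

set_option linter.unusedSectionVars false

open Equiv Equiv.Perm

variable {α β : Type*} [Fintype α] [DecidableEq α] [Fintype β] [DecidableEq β]

/-- Symmetric power of a permutation of an arbitrary type. -/
private def sp (σ : Equiv.Perm α) (k : ℕ) : Equiv.Perm (Sym α k) :=
  (Sym.equivCongr σ : Sym α k ≃ Sym α k)

private def psum (p : Equiv.Perm α) (q : Equiv.Perm β) : Equiv.Perm (α ⊕ β) :=
  Equiv.sumCongr p q

private def pOpt (σ : Equiv.Perm α) : Equiv.Perm (Option α) :=
  Equiv.optionCongr σ

private lemma symPow_eq_sp {n : ℕ} (σ : Equiv.Perm (Fin n)) (k : ℕ) :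
    σ.symPow k = sp σ k := rfl

private lemma fixCount_permCongr (e : α ≃ β) (τ : Equiv.Perm α) :
    fixCount (e.permCongr τ) = fixCount τ := by
  refine Fintype.card_congr (e.subtypeEquiv fun a => ?_).symm
  simp [Equiv.permCongr_apply]

private lemma cycleType_permCongr (e : α ≃ β) (τ : Equiv.Perm α) :
    (e.permCongr τ).cycleType = τ.cycleType := by
  have h : e.permCongr τ
      = τ.extendDomain (e.trans (Equiv.subtypeUnivEquiv
        (p := fun _ : β => True) (fun _ => trivial)).symm) := by
    set f := e.trans (Equiv.subtypeUnivEquiv (p := fun _ : β => True) (fun _ => trivial)).symm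
    apply Equiv.ext; intro b
    have hb : ((f (e.symm b) : {x : β // True}) : β) = b := by
      simp [f]
    conv_rhs => rw [← hb]
    rw [Equiv.Perm.extendDomain_apply_image]
    simp [f, Equiv.permCongr_apply]
  rw [h, Equiv.Perm.cycleType_extendDomain]

private lemma cycleCount_eq_count (τ : Equiv.Perm α) {s : ℕ} (hs : s ≠ 1) :
    cycleCount τ s = τ.cycleType.count s := by
  rw [cycleCount, if_neg hs, Equiv.Perm.cycleType_def, Multiset.count_map]
  rw [Finset.card, Finset.filter_val]
  congr 1
  apply Multiset.filter_congr
  intro c _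
  constructor
  · intro h; simpa using h.symm
  · intro h; simpa using h.symm

private lemma cycleCount_permCongr (e : α ≃ β) (τ : Equiv.Perm α) (s : ℕ) :
    cycleCount (e.permCongr τ) s = cycleCount τ s := by
  by_cases hs : s = 1
  · subst hs; simp [cycleCount, fixCount_permCongr]
  · rw [cycleCount_eq_count _ hs, cycleCount_eq_count _ hs, cycleType_permCongr]

/-- An equivalence onto the left part of a sum. -/
private def eqL : α ≃ {x : α ⊕ β // x.isLeft} where
  toFun a := ⟨.inl a, rfl⟩
  invFun x := x.1.getLeft x.2
  left_inv a := rfl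
  right_inv := by rintro ⟨(a | b), hx⟩
                  · rfl
                  · exact absurd hx (by simp)

private lemma cycleType_psum_one (p : Equiv.Perm α) :
    (psum p (1 : Equiv.Perm β)).cycleType = p.cycleType := by
  have h : psum p (1 : Equiv.Perm β) = p.extendDomain (eqL (α := α) (β := β)) := by
    apply Equiv.ext; intro x
    cases x with
    | inl a =>
      have := Equiv.Perm.extendDomain_apply_image p (eqL (α := α) (β := β)) a
      exact this.symm
    | inr b =>
      rw [Equiv.Perm.extendDomain_apply_not_subtype _ _ (by simp)]
      rfl
  rw [h, Equiv.Perm.cycleType_extendDomain]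

private lemma cycleType_one_psum (q : Equiv.Perm β) :
    (psum (1 : Equiv.Perm α) q).cycleType = q.cycleType := by
  have h : psum (1 : Equiv.Perm α) q
      = (Equiv.sumComm β α).permCongr (psum q (1 : Equiv.Perm α)) := by
    apply Equiv.ext; intro x; cases x <;> rfl
  rw [h, cycleType_permCongr, cycleType_psum_one]

private lemma disjoint_psum (p : Equiv.Perm α) (q : Equiv.Perm β) :
    Equiv.Perm.Disjoint (psum p (1 : Equiv.Perm β)) (psum (1 : Equiv.Perm α) q) := by
  intro x
  cases x with
  | inl a => right; rfl
  | inr b => left; rfl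

private lemma cycleType_psum (p : Equiv.Perm α) (q : Equiv.Perm β) :
    (psum p q).cycleType = p.cycleType + q.cycleType := by
  have h : psum p q = psum p (1 : Equiv.Perm β) * psum (1 : Equiv.Perm α) q := by
    apply Equiv.ext; intro x; cases x <;> rfl
  rw [h, (disjoint_psum p q).cycleType_mul, cycleType_psum_one, cycleType_one_psum]

private lemma fixCount_psum (p : Equiv.Perm α) (q : Equiv.Perm β) :
    fixCount (psum p q) = fixCount p + fixCount q := by
  rw [fixCount, fixCount, fixCount, ← Fintype.card_sum]
  refine Fintype.card_congr ?_
  exact {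
    toFun := fun x => match x with
      | ⟨.inl a, h⟩ => .inl ⟨a, by simpa [psum] using h⟩
      | ⟨.inr b, h⟩ => .inr ⟨b, by simpa [psum] using h⟩
    invFun := fun x => match x with
      | .inl ⟨a, h⟩ => ⟨.inl a, by simpa [psum] using h⟩
      | .inr ⟨b, h⟩ => ⟨.inr b, by simpa [psum] using h⟩
    left_inv := by rintro ⟨(a | b), h⟩ <;> rfl
    right_inv := by rintro (⟨a, h⟩ | ⟨b, h⟩) <;> rfl }

private lemma cycleCount_psum (p : Equiv.Perm α) (q : Equiv.Perm β) (s : ℕ) :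
    cycleCount (psum p q) s = cycleCount p s + cycleCount q s := by
  by_cases hs : s = 1
  · subst hs; simp [cycleCount, fixCount_psum]
  · rw [cycleCount_eq_count _ hs, cycleCount_eq_count _ hs, cycleCount_eq_count _ hs,
      cycleType_psum, Multiset.count_add]

private lemma sp_permCongr (e : α ≃ β) (τ : Equiv.Perm α) (k : ℕ) :
    sp (e.permCongr τ) k = (Sym.equivCongr e (n := k)).permCongr (sp τ k) := by
  apply Equiv.ext; intro m
  show Sym.map (e.permCongr τ) m = Sym.map e (Sym.map τ (Sym.map e.symm m))
  rw [Sym.map_map, Sym.map_map]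
  rfl

private lemma cycleCount_sp_conj (σ τ : Equiv.Perm α) (h : IsConj σ τ) (k s : ℕ) :
    cycleCount (sp σ k) s = cycleCount (sp τ k) s := by
  obtain ⟨g, hg⟩ := isConj_iff.1 h
  have hτ : τ = (g : Equiv.Perm α).permCongr σ := by
    apply Equiv.ext; intro x; rw [← hg]; rfl
  rw [hτ, sp_permCongr, cycleCount_permCongr]

private lemma cycleType_pOpt (σ' : Equiv.Perm α) :
    (pOpt σ').cycleType = σ'.cycleType := by
  set e0 : α ≃ {x : Option α // x.isSome} := (Equiv.optionIsSomeEquiv α).symm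
  have h : pOpt σ' = σ'.extendDomain e0 := by
    apply Equiv.ext; intro x
    cases x with
    | none =>
      rw [Equiv.Perm.extendDomain_apply_not_subtype _ _ (by simp)]
      rfl
    | some a =>
      have := Equiv.Perm.extendDomain_apply_image σ' e0 a
      have ha : ((e0 a : {x : Option α // x.isSome}) : Option α) = some a := rfl
      rw [ha] at this
      rw [this]
      rfl
  rw [h, Equiv.Perm.cycleType_extendDomain]

private lemma decomp (σ' : Equiv.Perm α) (m s : ℕ) :
    cycleCount (sp (pOpt σ') (m + 1)) s =
      cycleCount (sp (pOpt σ') m) s + cycleCount (sp σ' (m + 1)) s := by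
  have key : (symOptionSuccEquiv (α := α) (n := m)).permCongr (sp (pOpt σ') (m + 1)) =
      psum (sp (pOpt σ') m) (sp σ' (m + 1)) := by
    apply Equiv.ext; intro z
    rw [Equiv.permCongr_apply, Equiv.apply_eq_iff_eq_symm_apply]
    cases z with
    | inl u =>
      show Sym.map (pOpt σ') (Sym.cons none u)
          = Sym.cons none (Sym.map (pOpt σ') u)
      rw [Sym.map_cons]
      rfl
    | inr u =>
      show Sym.map (pOpt σ') (Sym.map Function.Embedding.some u)
          = Sym.map Function.Embedding.some (Sym.map σ' u)
      rw [Sym.map_map, Sym.map_map]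
      rfl
  rw [← cycleCount_permCongr (symOptionSuccEquiv (α := α) (n := m)) _ s, key, cycleCount_psum]

end Aux

/-- Recursion for the number of `s`-cycles of the symmetric tensor power of an `ℓ`-cycle. -/
theorem cycleCount_symPow_cycle_recursion (ℓ n k s : ℕ) (hℓ : 2 ≤ ℓ) (hn : ℓ < n)
    (hk : 1 < k) (hs1 : 1 ≤ s)
    (σ : Equiv.Perm (Fin n)) (hc : σ.IsCycle) (hsupp : σ.support.card = ℓ)
    (σ' : Equiv.Perm (Fin (n - 1))) (hc' : σ'.IsCycle) (hsupp' : σ'.support.card = ℓ) :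
    cycleCount (σ.symPow k) s =
      cycleCount (σ'.symPow k) s + cycleCount (σ.symPow (k - 1)) s := by
  obtain ⟨m, rfl⟩ : ∃ m, k = m + 1 := ⟨k - 1, (Nat.succ_pred_eq_of_pos (by omega)).symm⟩
  have hn1 : n = n - 1 + 1 := (Nat.succ_pred_eq_of_pos (by omega)).symm
  set e : Fin n ≃ Option (Fin (n - 1)) := (finCongr hn1).trans (finSuccEquiv (n - 1)) with he
  set τ : Equiv.Perm (Option (Fin (n - 1))) := pOpt σ' with hτ
  have h1 : IsConj σ (e.symm.permCongr τ) := by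
    apply Equiv.Perm.isConj_of_cycleType_eq
    rw [cycleType_permCongr, hτ, cycleType_pOpt, hc.cycleType, hc'.cycleType,
      hsupp, hsupp']
  have h2 : ∀ j, cycleCount (sp σ j) s = cycleCount (sp τ j) s := by
    intro j
    rw [cycleCount_sp_conj _ _ h1 j s, sp_permCongr, cycleCount_permCongr]
  have main := decomp σ' m s
  show cycleCount (sp σ (m + 1)) s = cycleCount (sp σ' (m + 1)) s + cycleCount (sp σ m) s
  rw [h2 (m + 1), h2 m, main, Nat.add_comm]
end

section
/- Let ℓ ≥ 2, n ≥ ℓ, k ≥ 1, and let s be a positive integer dividing ℓ. Let σ be an ℓ-cycle in the permutations of Fin n. Then, as an identity of integers, s * C_s(σ^{⊙k}) = ∑_{e ∈ divisors of s} μ(s/e) * ∑_{r=0}^{⌊k*e/ℓ⌋} (multichoose e r) * (multichoose (n − ℓ) (k − r*ℓ/e)), where μ is the Möbius function and ℓ/e is an integer since e divides s and s divides ℓ. -/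
/-!
Möbius inversion of `fixCount (τ ^ e) = ∑ d ∣ e, d * cycleCount τ d` reduces the count of
`s`-cycles of `σ^{⊙k}` to the fixed points of `(σ^{⊙k})^e = (σ^e)^{⊙k}`. A multiset is fixed by
`(σ^e)^{⊙k}` exactly when its multiplicity function is constant on the cycles of `σ^e`. For an
`ℓ`-cycle `σ` and `e ∣ ℓ` these are `e` cycles of length `ℓ / e` and the `n - ℓ` fixed points, so
a fixed multiset is a multiset of size `r` on the long cycles, each element counted `ℓ / e` times,
plus a multiset of size `k - r * ℓ / e` on the fixed points.
-/

open Finset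

namespace Equiv.Perm

variable {α : Type*} [Fintype α] [DecidableEq α]

theorem pow_apply_eq_self_iff_orderOf_cycleOf_dvd (τ : Perm α) (e : ℕ) (x : α) :
    (τ ^ e) x = x ↔ orderOf (τ.cycleOf x) ∣ e := by
  by_cases hx : τ x = x
  · simp [pow_apply_eq_self_of_apply_eq_self hx, cycleOf_eq_one_iff τ |>.2 hx]
  · rw [orderOf_dvd_iff_pow_eq_one, (isCycle_cycleOf τ hx).pow_eq_one_iff' (x := x)
      (by rwa [cycleOf_apply_self]), cycleOf_pow_apply_self]

theorem card_filter_orderOf_cycleOf_eq (τ : Perm α) {d : ℕ} (hd : 0 < d) :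
    #{x | orderOf (τ.cycleOf x) = d} = d * cycleCount τ d := by
  obtain rfl | hd1 := eq_or_ne d 1
  · simp [cycleCount, fixCount, Fintype.card_subtype, cycleOf_eq_one_iff]
  have hfilter : ({x | orderOf (τ.cycleOf x) = d} : Finset α) =
      {c ∈ τ.cycleFactorsFinset | #c.support = d}.biUnion support := by
    ext x
    simp only [mem_filter, mem_univ, true_and, mem_biUnion]
    constructor
    · intro hx
      have hτx : τ x ≠ x := fun h => hd1 (by simpa [cycleOf_eq_one_iff τ |>.2 h] using hx.symm)
      refine ⟨τ.cycleOf x, ⟨cycleOf_mem_cycleFactorsFinset_iff.2 (mem_support.2 hτx), ?_⟩,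
        mem_support_cycleOf_iff.2 ⟨SameCycle.refl _ _, mem_support.2 hτx⟩⟩
      rwa [← (isCycle_cycleOf τ hτx).orderOf]
    · rintro ⟨c, ⟨hc, hcd⟩, hxc⟩
      rw [← cycle_is_cycleOf hxc hc, (mem_cycleFactorsFinset_iff.1 hc).1.orderOf, hcd]
  rw [hfilter, card_biUnion, sum_congr rfl fun c hc => (mem_filter.1 hc).2, sum_const,
    smul_eq_mul, mul_comm, cycleCount, if_neg hd1]
  intro c hc c' hc' hne
  exact (cycleFactorsFinset_pairwise_disjoint τ (mem_filter.1 hc).1 (mem_filter.1 hc').1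
    hne).disjoint_support

theorem fixCount_pow_eq_sum_divisors (τ : Perm α) {e : ℕ} (he : e ≠ 0) :
    fixCount (τ ^ e) = ∑ d ∈ e.divisors, d * cycleCount τ d := by
  have hmaps : ∀ x ∈ ({x | (τ ^ e) x = x} : Finset α), orderOf (τ.cycleOf x) ∈ e.divisors :=
    fun x hx => Nat.mem_divisors.2
      ⟨(pow_apply_eq_self_iff_orderOf_cycleOf_dvd τ e x).1 (mem_filter.1 hx).2, he⟩
  rw [fixCount, Fintype.card_subtype, card_eq_sum_card_fiberwise hmaps]
  refine sum_congr rfl fun d hd => ?_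
  rw [← card_filter_orderOf_cycleOf_eq τ (Nat.pos_of_mem_divisors hd), filter_filter]
  congr 1
  ext x
  simp only [mem_filter, mem_univ, true_and, pow_apply_eq_self_iff_orderOf_cycleOf_dvd]
  exact ⟨fun h => h.2, fun h => ⟨h ▸ Nat.dvd_of_mem_divisors hd, h⟩⟩

open ArithmeticFunction in
theorem natCast_mul_cycleCount_eq_sum_moebius (τ : Perm α) (s : ℕ) :
    (s : ℤ) * cycleCount τ s = ∑ e ∈ s.divisors, moebius (s / e) * (fixCount (τ ^ e) : ℤ) := by
  obtain rfl | hs := eq_or_ne s 0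
  · simp
  have := (sum_eq_iff_sum_smul_moebius_eq (f := fun d => (d : ℤ) * cycleCount τ d)
    (g := fun e => (fixCount (τ ^ e) : ℤ))).1 (fun e he => by
      rw [fixCount_pow_eq_sum_divisors τ he.ne']; push_cast; rfl) s (Nat.pos_of_ne_zero hs)
  rw [← this, Nat.sum_divisorsAntidiagonal' (f := fun a b => moebius a • (fixCount (τ ^ b) : ℤ))]
  simp

end Equiv.Perm

theorem natCard_weightedSum_eq_sum_multichoose (A B : Type*) [Fintype A] [Fintype B] {q : ℕ}
    (hq : 0 < q) (k : ℕ) :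
    Nat.card {p : (A → ℕ) × (B → ℕ) // q * ∑ a, p.1 a + ∑ b, p.2 b = k} =
      ∑ r ∈ range (k / q + 1),
        Nat.multichoose (Fintype.card A) r * Nat.multichoose (Fintype.card B) (k - q * r) := by
  classical
  let E : {p : (A → ℕ) × (B → ℕ) // q * ∑ a, p.1 a + ∑ b, p.2 b = k} ≃
      Σ r : Fin (k / q + 1), {f : A → ℕ // ∑ a, f a = r} × {g : B → ℕ // ∑ b, g b = k - q * r} :=
    { toFun := fun p => ⟨⟨∑ a, p.1.1 a, Nat.lt_succ_of_le <| (Nat.le_div_iff_mul_le hq).2 <| by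
          rw [mul_comm]; exact Nat.le.intro p.2⟩,
        ⟨p.1.1, rfl⟩, ⟨p.1.2, (Nat.sub_eq_of_eq_add' p.2.symm).symm⟩⟩
      invFun x := ⟨(x.2.1, x.2.2), by
          have := (Nat.le_div_iff_mul_le hq).1 (Nat.le_of_lt_succ x.1.2)
          rw [mul_comm] at this
          rw [x.2.1.2, x.2.2.2]
          omega⟩
      left_inv _ := rfl
      right_inv := by
        rintro ⟨⟨r, hr⟩, ⟨f, hf⟩, g⟩
        obtain rfl : ∑ a, f a = r := hf
        rfl }
  rw [Nat.card_congr (E.trans (Equiv.sigmaCongrRight fun r =>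
      (Sym.equivNatSumOfFintype A r).symm.prodCongr (Sym.equivNatSumOfFintype B _).symm)),
    Nat.card_eq_fintype_card, Fintype.card_sigma,
    Fin.sum_univ_eq_sum_range (fun r => Fintype.card (Sym A r × Sym B (k - q * r)))]
  simp [Sym.card_sym_eq_multichoose]

namespace Equiv.Perm

variable {α β : Type*}

abbrev InvariantWeights (ρ : Perm α) : Type _ := {f : α → ℕ // ∀ a, f (ρ a) = f a}

theorem InvariantWeights.apply_pow_apply {ρ : Perm α} (f : ρ.InvariantWeights) (j : ℕ) (a : α) :
    f.1 ((ρ ^ j) a) = f.1 a := by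
  induction j with
  | zero => rfl
  | succ j ih => rw [pow_succ', mul_apply, f.2, ih]

theorem sym_map_eq_self_iff_count [DecidableEq α] {ρ : Perm α} {k : ℕ} (m : Sym α k) :
    Sym.map ρ m = m ↔ ∀ a, (m : Multiset α).count (ρ a) = (m : Multiset α).count a := by
  rw [← Sym.coe_inj, Sym.coe_map]
  constructor
  · intro h a
    rw [← Multiset.count_map_eq_count' ρ _ ρ.injective a, h]
  · intro h
    ext b
    rw [← ρ.apply_symm_apply b, Multiset.count_map_eq_count' _ _ ρ.injective, h]

noncomputable def symMapFixedEquivInvariantWeights [Fintype α] [DecidableEq α] (ρ : Perm α)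
    (k : ℕ) :
    {m : Sym α k // Sym.map ρ m = m} ≃ {f : ρ.InvariantWeights // ∑ a, f.1 a = k} :=
  ((Sym.equivNatSumOfFintype α k).subtypeEquiv
      (q := fun f => ∀ a, f.1 (ρ a) = f.1 a) fun m => by simp [sym_map_eq_self_iff_count]).trans <|
    (subtypeSubtypeEquivSubtypeInter (fun f : α → ℕ => ∑ a, f a = k) _).trans <|
      (subtypeEquivRight fun _ => and_comm).trans
        (subtypeSubtypeEquivSubtypeInter (fun f : α → ℕ => ∀ a, f (ρ a) = f a) _).symm

def conjInvariantWeightsEquiv (π ρ : Perm α) :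
    (π * ρ * π⁻¹).InvariantWeights ≃ ρ.InvariantWeights where
  toFun f := ⟨fun a => f.1 (π a), fun a => by simpa using f.2 (π a)⟩
  invFun f := ⟨fun b => f.1 (π⁻¹ b), fun b => by simpa using f.2 (π⁻¹ b)⟩
  left_inv f := by ext; simp
  right_inv f := by ext; simp

def extendDomainInvariantWeightsEquiv {p : β → Prop} [DecidablePred p] (ρ : Perm α)
    (F : α ≃ Subtype p) :
    (ρ.extendDomain F).InvariantWeights ≃ ρ.InvariantWeights × ({b // ¬p b} → ℕ) where
  toFun g := (⟨fun a => g.1 (F a), fun a => by simpa using g.2 (F a)⟩, fun b => g.1 b)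
  invFun x := ⟨fun b => if hb : p b then x.1.1 (F.symm ⟨b, hb⟩) else x.2 ⟨b, hb⟩, fun b => by
    by_cases hb : p b
    · simp [extendDomain_apply_subtype _ _ hb, hb, x.1.2, Subtype.prop]
    · simp [extendDomain_apply_not_subtype _ _ hb, hb]⟩
  left_inv g := by
    ext b
    by_cases hb : p b <;> simp [hb]
  right_inv x := by
    ext b
    · simp [Subtype.prop]
    · simp [b.2]

theorem sum_extendDomainInvariantWeightsEquiv [Fintype α] [Fintype β] {p : β → Prop}
    [DecidablePred p] (ρ : Perm α) (F : α ≃ Subtype p) (g : (ρ.extendDomain F).InvariantWeights) :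
    ∑ b, g.1 b = ∑ a, (extendDomainInvariantWeightsEquiv ρ F g).1.1 a +
      ∑ b, (extendDomainInvariantWeightsEquiv ρ F g).2 b := by
  rw [← Fintype.sum_subtype_add_sum_subtype p g.1, ← Equiv.sum_comp F.symm]
  simp [extendDomainInvariantWeightsEquiv]

theorem coe_finRotate_pow {ℓ : ℕ} (j : ℕ) (x : Fin ℓ) :
    ((finRotate ℓ ^ j) x : ℕ) = (x + j) % ℓ := by
  have : NeZero ℓ := ⟨x.pos.ne'⟩
  induction j with
  | zero => simp [Nat.mod_eq_of_lt x.2]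
  | succ j ih =>
    rw [pow_succ', mul_apply, finRotate_apply, Fin.val_add, ih, Fin.val_one', Nat.add_mod_mod,
      Nat.mod_add_mod, add_assoc]

/-- Under `Fin q × Fin e ≃ Fin (q * e)`, `(a, b) ↦ b + e * a`, the `e`-th power of the rotation
rotates the `Fin q` factor, so an invariant function only depends on the `Fin e` coordinate. -/
def finRotatePowInvariantWeightsEquiv {q e : ℕ} (hq : 0 < q) :
    ((finRotate (q * e)) ^ e).InvariantWeights ≃ (Fin e → ℕ) where
  toFun g j := g.1 (finProdFinEquiv (⟨0, hq⟩, j))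
  invFun h := ⟨fun x => h x.modNat, fun x => congrArg h <| Fin.ext <| by
    rw [Fin.coe_modNat, Fin.coe_modNat, coe_finRotate_pow, Nat.mod_mod_of_dvd _ (dvd_mul_left e q),
      Nat.add_mod_right]⟩
  left_inv g := by
    ext x
    have hx : (finRotate (q * e) ^ (e * x.divNat)) (finProdFinEquiv (⟨0, hq⟩, x.modNat)) = x :=
      Fin.ext <| by
        rw [coe_finRotate_pow]
        simp [Nat.mod_add_div, Nat.mod_eq_of_lt x.2]
    conv_rhs => rw [← hx]
    rw [pow_mul, g.apply_pow_apply]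
  right_inv h := by
    ext j
    exact congrArg h (congrArg Prod.snd (finProdFinEquiv.symm_apply_apply (⟨0, hq⟩, j)))

theorem sum_finRotatePowInvariantWeightsEquiv {q e : ℕ} (hq : 0 < q)
    (g : ((finRotate (q * e)) ^ e).InvariantWeights) :
    ∑ x, g.1 x = q * ∑ j, finRotatePowInvariantWeightsEquiv hq g j := by
  set h := finRotatePowInvariantWeightsEquiv hq g
  have hg : ∀ x, g.1 x = h x.modNat := fun x =>
    congrArg (fun f => f.1 x) ((finRotatePowInvariantWeightsEquiv hq).symm_apply_apply g).symm
  calc ∑ x, g.1 x = ∑ x, h (finProdFinEquiv.symm x).2 := sum_congr rfl fun x _ => hg x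
    _ = ∑ p : Fin q × Fin e, h p.2 := Equiv.sum_comp _ (fun p : Fin q × Fin e => h p.2)
    _ = q * ∑ j, h j := by simp [Fintype.sum_prod_type]

theorem natCard_invariantWeights_extendDomain_finRotate_pow [Fintype β] {p : β → Prop}
    [DecidablePred p] {q e : ℕ} (hq : 0 < q) (F : Fin (q * e) ≃ Subtype p) (k : ℕ) :
    Nat.card {f : ((finRotate (q * e)).extendDomain F ^ e).InvariantWeights // ∑ b, f.1 b = k} =
      ∑ r ∈ range (k / q + 1),
        Nat.multichoose e r * Nat.multichoose (Fintype.card {b // ¬p b}) (k - q * r) := by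
  classical
  have hE := (Nat.card_congr <| ((extendDomainInvariantWeightsEquiv _ F).trans
    ((finRotatePowInvariantWeightsEquiv hq).prodCongr (Equiv.refl _))).subtypeEquiv
      (p := fun g => ∑ b, g.1 b = k) (q := fun x => q * ∑ j, x.1 j + ∑ b, x.2 b = k) fun g => by
        rw [sum_extendDomainInvariantWeightsEquiv, sum_finRotatePowInvariantWeightsEquiv hq]
        rfl)
  rw [← extendDomain_pow, hE, natCard_weightedSum_eq_sum_multichoose _ _ hq, Fintype.card_fin]

theorem natCard_invariantWeights_pow_of_isCycle [Fintype α] [DecidableEq α] {σ : Perm α}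
    (hc : σ.IsCycle) {q e : ℕ} (hsupp : #σ.support = q * e) (k : ℕ) :
    Nat.card {f : (σ ^ e).InvariantWeights // ∑ a, f.1 a = k} =
      ∑ r ∈ range (k / q + 1),
        Nat.multichoose e r * Nat.multichoose (Fintype.card α - q * e) (k - q * r) := by
  have h2 : 2 ≤ q * e := hsupp ▸ hc.two_le_card_support
  have hq : 0 < q := Nat.pos_of_ne_zero (by rintro rfl; simp at h2)
  obtain ⟨F₀⟩ : Nonempty (Fin (q * e) ↪ α) :=
    Function.Embedding.nonempty_of_card_le (by simpa [← hsupp] using card_le_univ σ.support)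
  classical
  let F := Equiv.ofInjective F₀ F₀.injective
  have hc₀ : ((finRotate (q * e)).extendDomain F).IsCycle :=
    (isCycle_finRotate_of_le h2).extendDomain F
  have hsupp₀ : #((finRotate (q * e)).extendDomain F).support = q * e := by
    simpa [cycleType_extendDomain, cycleType_finRotate_of_le h2] using hc₀.cycleType.symm
  obtain ⟨π, rfl⟩ := isConj_iff.1 (hc₀.isConj hc (hsupp₀.trans hsupp.symm))
  rw [conj_pow, Nat.card_congr ((conjInvariantWeightsEquiv π _).subtypeEquiv
      (q := fun f => ∑ a, f.1 a = k) fun f => by rw [← Equiv.sum_comp π]; rfl),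
    natCard_invariantWeights_extendDomain_finRotate_pow hq F, Fintype.card_subtype_compl,
    Fintype.card_congr F.symm, Fintype.card_fin]

def symPowHom (n k : ℕ) : Perm (Fin n) →* Perm (Sym (Fin n) k) where
  toFun σ := σ.symPow k
  map_one' := Equiv.ext Sym.map_id'
  map_mul' σ τ := Equiv.ext fun m => (Sym.map_map σ τ m).symm

theorem symPow_pow {n : ℕ} (σ : Perm (Fin n)) (k e : ℕ) : σ.symPow k ^ e = (σ ^ e).symPow k :=
  (map_pow (symPowHom n k) σ e).symm

theorem fixCount_symPow_pow_of_isCycle {n q e : ℕ} {σ : Perm (Fin n)} (hc : σ.IsCycle)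
    (hsupp : #σ.support = q * e) (k : ℕ) :
    fixCount (σ.symPow k ^ e) = ∑ r ∈ range (k / q + 1),
      Nat.multichoose e r * Nat.multichoose (n - q * e) (k - q * r) := by
  have := natCard_invariantWeights_pow_of_isCycle hc hsupp k
  rw [Fintype.card_fin] at this
  rw [symPow_pow, fixCount, ← Nat.card_eq_fintype_card, ← this]
  exact Nat.card_congr (symMapFixedEquivInvariantWeights (σ ^ e) k)

end Equiv.Perm

theorem cycleCount_symPow_cycle_closedForm_general (ℓ n k s : ℕ) (hsl : s ∣ ℓ)
    (σ : Equiv.Perm (Fin n)) (hc : σ.IsCycle) (hsupp : σ.support.card = ℓ) :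
    (s : ℤ) * (cycleCount (σ.symPow k) s : ℤ) =
      ∑ e ∈ s.divisors, (ArithmeticFunction.moebius (s / e)) *
        ∑ r ∈ Finset.range (k * e / ℓ + 1),
          (Nat.multichoose e r : ℤ) * (Nat.multichoose (n - ℓ) (k - r * ℓ / e) : ℤ) := by
  rw [Equiv.Perm.natCast_mul_cycleCount_eq_sum_moebius]
  refine sum_congr rfl fun e he => ?_
  have he0 : 0 < e := Nat.pos_of_mem_divisors he
  obtain ⟨q, rfl⟩ := (Nat.dvd_of_mem_divisors he).trans hsl
  rw [Nat.mul_comm e q] at hsupp ⊢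
  have hrq (r : ℕ) : r * (q * e) / e = q * r := by
    rw [← Nat.mul_assoc, Nat.mul_div_cancel _ he0, Nat.mul_comm]
  rw [Equiv.Perm.fixCount_symPow_pow_of_isCycle hc hsupp k, Nat.mul_div_mul_right _ _ he0]
  simp only [hrq, Nat.cast_sum, Nat.cast_mul]

/-- Closed form for the number of `s`-cycles of the symmetric tensor power of an `ℓ`-cycle in
`Fin n`, for `s ∣ ℓ`. -/
theorem cycleCount_symPow_cycle_closedForm (ℓ n k s : ℕ) (hℓ : 2 ≤ ℓ) (hn : ℓ ≤ n)
    (hk : 1 ≤ k) (hs1 : 0 < s) (hsl : s ∣ ℓ)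
    (σ : Equiv.Perm (Fin n)) (hc : σ.IsCycle) (hsupp : σ.support.card = ℓ) :
    (s : ℤ) * (cycleCount (σ.symPow k) s : ℤ) =
      ∑ e ∈ s.divisors, (ArithmeticFunction.moebius (s / e)) *
        ∑ r ∈ Finset.range (k * e / ℓ + 1),
          (Nat.multichoose e r : ℤ) * (Nat.multichoose (n - ℓ) (k - r * ℓ / e) : ℤ) :=
  cycleCount_symPow_cycle_closedForm_general ℓ n k s hsl σ hc hsupp
end

section
/- Let ℓ ≥ 2, n ≥ ℓ and k ≥ 1, and let σ be an ℓ-cycle in the permutations of Fin n. Then the number of fixed points of σ^{⊙k} equals ∑_{r=0}^{⌊k/ℓ⌋} multichoose (n − ℓ) (k − r*ℓ). -/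
private lemma count_apply_eq {n : ℕ} (σ : Equiv.Perm (Fin n)) (u : Multiset (Fin n))
    (h : u.map σ = u) (x : Fin n) : u.count (σ x) = u.count x := by
  conv_lhs => rw [← h]
  exact Multiset.count_map_eq_count' σ u σ.injective x

private lemma count_const_on_supp {n : ℕ} {σ : Equiv.Perm (Fin n)} (hc : σ.IsCycle)
    (u : Multiset (Fin n)) (h : u.map σ = u) {x y : Fin n}
    (hx : x ∈ σ.support) (hy : y ∈ σ.support) : u.count x = u.count y := by
  obtain ⟨i, hi⟩ := hc.exists_pow_eq (Equiv.Perm.mem_support.mp hx) (Equiv.Perm.mem_support.mp hy)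
  rw [← hi]
  clear hi
  induction i with
  | zero => simp
  | succ i ih =>
    rw [pow_succ', Equiv.Perm.mul_apply, count_apply_eq σ u h, ih]

/-- Closed form for the number of fixed points of the symmetric tensor power of an `ℓ`-cycle
in `Fin n`. -/
theorem fixCount_symPow_cycle_closedForm (ℓ n k : ℕ) (hℓ : 2 ≤ ℓ) (hn : ℓ ≤ n) (hk : 1 ≤ k)
    (σ : Equiv.Perm (Fin n)) (hc : σ.IsCycle) (hsupp : σ.support.card = ℓ) :
    fixCount (σ.symPow k) =
      ∑ r ∈ Finset.range (k / ℓ + 1), Nat.multichoose (n - ℓ) (k - r * ℓ) := by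
  classical
  set s : Finset (Fin n) := σ.support with hs
  obtain ⟨x₀, hx₀⟩ : ∃ x, x ∈ s := by
    have : 0 < s.card := by omega
    exact (Finset.card_pos.mp this).exists_mem
  have hfix : ∀ m : Sym (Fin n) k, σ.symPow k m = m ↔ (m : Multiset (Fin n)).map σ = m := by
    intro m
    rw [← Sym.coe_inj]
    have : ((σ.symPow k m : Sym (Fin n) k) : Multiset (Fin n)) = (m : Multiset (Fin n)).map σ :=
      Sym.coe_map m σ
    rw [this]
  have hcnt_s : ∀ x : Fin n, s.val.count x = if x ∈ s then 1 else 0 := by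
    intro x
    by_cases hx : x ∈ s
    · simp [hx, Multiset.count_eq_one_of_mem s.nodup hx]
    · simp [hx, Multiset.count_eq_zero_of_notMem (s := s.val) hx]
  have hcards : Multiset.card s.val = ℓ := hsupp
  have hℓpos : 0 < ℓ := by omega
  -- elements of a mapped complement multiset avoid s
  have hmapval : ∀ (m' : Multiset {x : Fin n // x ∉ s}) (x : Fin n), x ∈ s →
      (m'.map Subtype.val).count x = 0 := by
    intro m' x hx
    apply Multiset.count_eq_zero_of_notMem
    intro hmem
    obtain ⟨a, _, rfl⟩ := Multiset.mem_map.mp hmem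
    exact a.2 hx
  rw [fixCount, Fintype.card_subtype]
  rw [Finset.card_eq_sum_card_fiberwise
      (f := fun m : Sym (Fin n) k => (m : Multiset (Fin n)).count x₀)
      (t := Finset.range (k / ℓ + 1)) ?hmem]
  case hmem =>
    intro m hm
    rw [Finset.mem_coe, Finset.mem_filter] at hm
    have hfm : (m : Multiset (Fin n)).map σ = m := (hfix m).mp hm.2
    set r := (m : Multiset (Fin n)).count x₀ with hr
    have hle : r • s.val ≤ (m : Multiset (Fin n)) := by
      rw [Multiset.le_iff_count]
      intro x
      rw [Multiset.count_nsmul, hcnt_s x]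
      by_cases hx : x ∈ s
      · simp only [hx, if_true, mul_one]
        rw [hr]
        exact le_of_eq (count_const_on_supp hc _ hfm hx₀ hx)
      · simp [hx]
    have hcard := Multiset.card_le_card hle
    have hmk : Multiset.card (m : Multiset (Fin n)) = k := m.2
    rw [Multiset.card_nsmul, hcards, hmk] at hcard
    simp only [Finset.mem_coe, Finset.mem_range, Nat.lt_succ_iff]
    rw [Nat.le_div_iff_mul_le hℓpos]
    exact hcard
  · apply Finset.sum_congr rfl
    intro r hrr
    rw [Finset.mem_range, Nat.lt_succ_iff] at hrr
    have hrk : r * ℓ ≤ k := (Nat.le_div_iff_mul_le hℓpos).mp hrr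
    have hcardc : Fintype.card {x : Fin n // x ∉ s} = n - ℓ := by
      rw [Fintype.card_subtype_compl]
      simp [hsupp]
    rw [← hcardc, ← Sym.card_sym_eq_multichoose, ← Finset.card_univ]
    -- count of the composite multiset
    have hcount_u : ∀ (m' : Multiset {x : Fin n // x ∉ s}) (x : Fin n),
        (r • s.val + m'.map Subtype.val).count x
          = if x ∈ s then r else (m'.map Subtype.val).count x := by
      intro m' x
      rw [Multiset.count_add, Multiset.count_nsmul, hcnt_s x]
      by_cases hx : x ∈ s
      · simp [hx, hmapval m' x hx]
      · simp [hx]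
    symm
    apply Finset.card_bij
      (i := fun (m' : Sym {x : Fin n // x ∉ s} (k - r * ℓ)) (_ : m' ∈ Finset.univ) =>
        (Sym.mk (r • s.val + (m' : Multiset {x : Fin n // x ∉ s}).map Subtype.val) (by
          have h4 : Multiset.card (m' : Multiset {x : Fin n // x ∉ s}) = k - r * ℓ := m'.2
          rw [Multiset.card_add, Multiset.card_nsmul, Multiset.card_map, hcards, h4]
          omega) : Sym (Fin n) k))
    · -- membership in the fiber
      intro m' _
      rw [Finset.mem_filter, Finset.mem_filter]
      refine ⟨⟨Finset.mem_univ (α := Sym (Fin n) k) _, ?_⟩, ?_⟩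
      · rw [hfix]
        show (r • s.val + (m' : Multiset {x : Fin n // x ∉ s}).map Subtype.val).map σ
            = r • s.val + (m' : Multiset {x : Fin n // x ∉ s}).map Subtype.val
        set u := r • s.val + (m' : Multiset {x : Fin n // x ∉ s}).map Subtype.val with hu
        refine Multiset.ext.mpr fun x => ?_
        have h1 : u.count x = (u.map σ).count x → (u.map σ).count x = u.count x :=
          fun h => h.symm
        apply h1
        have h2 : ((u.map σ)).count (σ (σ⁻¹ x)) = u.count (σ⁻¹ x) :=
          Multiset.count_map_eq_count' σ u σ.injective (σ⁻¹ x)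
        rw [show σ (σ⁻¹ x) = x from σ.apply_symm_apply x] at h2
        rw [h2, hcount_u, hcount_u]
        by_cases hx : x ∈ s
        · have hx' : σ⁻¹ x ∈ s := by
            rw [hs, ← Equiv.Perm.support_inv]
            exact Equiv.Perm.apply_mem_support.mpr (by rwa [Equiv.Perm.support_inv, ← hs])
          simp [hx, hx', show σ.symm x ∈ s from hx']
        · have hfx : σ x = x := Equiv.Perm.notMem_support.mp (by rwa [← hs])
          have hx' : σ⁻¹ x = x := by
            rw [Equiv.Perm.inv_eq_iff_eq]
            exact hfx.symm
          simp [hx, hx']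
      · show (r • s.val + (m' : Multiset {x : Fin n // x ∉ s}).map Subtype.val).count x₀ = r
        rw [hcount_u]
        simp [hx₀]
    · -- injectivity
      intro m₁ h₁ m₂ h₂ heq
      rw [← Sym.coe_inj] at heq
      have heq' : r • s.val + (m₁ : Multiset {x : Fin n // x ∉ s}).map Subtype.val
          = r • s.val + (m₂ : Multiset {x : Fin n // x ∉ s}).map Subtype.val := heq
      have := add_left_cancel heq'
      have := Multiset.map_injective Subtype.val_injective this
      exact Sym.coe_inj.mp this
    · -- surjectivity
      intro m hm
      rw [Finset.mem_filter, Finset.mem_filter] at hm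
      obtain ⟨⟨-, hfixm⟩, hcm⟩ := hm
      have hfm : (m : Multiset (Fin n)).map σ = m := (hfix m).mp hfixm
      have hconst : ∀ x ∈ s, (m : Multiset (Fin n)).count x = r := fun x hx =>
        (count_const_on_supp hc _ hfm hx hx₀).trans hcm
      have hdecomp : (m : Multiset (Fin n))
          = r • s.val + (m : Multiset (Fin n)).filter (fun x => x ∉ s) := by
        refine Multiset.ext.mpr fun x => ?_
        rw [Multiset.count_add, Multiset.count_nsmul, hcnt_s x, Multiset.count_filter]
        by_cases hx : x ∈ s
        · rw [hconst x hx]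
          simp [hx]
        · simp [hx]
      have hcardf : Multiset.card ((m : Multiset (Fin n)).filter (fun x => x ∉ s))
          = k - r * ℓ := by
        have h3 := congrArg Multiset.card hdecomp
        have hmk : Multiset.card (m : Multiset (Fin n)) = k := m.2
        rw [hmk, Multiset.card_add, Multiset.card_nsmul, hcards] at h3
        omega
      set m' : Multiset {x : Fin n // x ∉ s} :=
        ((m : Multiset (Fin n)).filter (fun x => x ∉ s)).attach.map
          (fun z => (⟨z.1, Multiset.of_mem_filter (p := fun x => x ∉ s) z.2⟩ : {x : Fin n // x ∉ s})) with hm'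
      have hmap : m'.map Subtype.val = (m : Multiset (Fin n)).filter (fun x => x ∉ s) := by
        rw [hm', Multiset.map_map]
        exact Multiset.attach_map_val _
      have hm'card : Multiset.card m' = k - r * ℓ := by
        rw [hm', Multiset.card_map, Multiset.card_attach, hcardf]
      refine ⟨⟨m', hm'card⟩, Finset.mem_univ _, ?_⟩
      rw [← Sym.coe_inj]
      show r • s.val + Multiset.map Subtype.val m' = (m : Multiset (Fin n))
      rw [hmap]
      exact hdecomp.symm
end
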